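/- arXiv:1304.5758 — 4 statements merged into one kernel-verified Lean document; each statement's English description precedes it below -/
import Mathlib

section
/- Let $c = 1 - 1/\sqrt{3}$ and let $n, K > 0$ with $\delta_0 = 2\sqrt{K/n} \leq 1/(2c)$. Then $\int_{\delta_0}^{1/c} \frac{1}{1 - \exp(-2c^2 u^2)}\, du \leq \frac{2}{3c^2 \delta_0} - \frac{4}{3c} + \frac{1}{2c(1-\exp(-1/2))}$. -/
open Real Set intervalIntegral

/-! Split the integral at `1 / (2c)`. Below that point `t = 2c²u² ≤ 1/2`, where
`1 - e^{-t} ≥ t - t²/2 ≥ 3t/4`, so the integrand is at most `2 / (3c²u²)`, whose integral is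
explicit. Above it the integrand is at most `1 / (1 - e^{-1/2})` on an interval of length
`1 / (2c)`. -/

theorem exp_neg_le_one_sub_add_sq_div_two {x : ℝ} (hx : 0 ≤ x) :
    exp (-x) ≤ 1 - x + x ^ 2 / 2 := by
  have hq := quadratic_le_exp_of_nonneg hx
  rw [exp_neg, inv_le_iff_one_le_mul₀ (exp_pos x)]
  -- `(1 - x + x²/2)(1 + x + x²/2) = 1 + x⁴/4`
  nlinarith [pow_nonneg hx 4, sq_nonneg (x - 1)]

theorem three_quarters_mul_le_one_sub_exp_neg {t : ℝ} (ht₀ : 0 ≤ t) (ht : t ≤ 1 / 2) :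
    3 / 4 * t ≤ 1 - exp (-t) := by
  nlinarith [exp_neg_le_one_sub_add_sq_div_two ht₀]

theorem integral_zpow_neg_two {a b : ℝ} (ha : 0 < a) (hb : 0 < b) :
    ∫ x in a..b, x ^ (-2 : ℤ) = a⁻¹ - b⁻¹ := by
  rw [integral_zpow (Or.inr ⟨by norm_num, notMem_uIcc_of_lt ha hb⟩)]
  norm_num [zpow_neg_one]
  ring

section Integrand

variable {c u : ℝ}

theorem one_sub_exp_neg_mul_sq_pos (hc : c ≠ 0) (hu : u ≠ 0) :
    0 < 1 - exp (-2 * c ^ 2 * u ^ 2) := by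
  have : 0 < c ^ 2 * u ^ 2 := by positivity
  rw [sub_pos, exp_lt_one_iff]
  linarith

theorem continuousOn_one_div_one_sub_exp (hc : c ≠ 0) :
    ContinuousOn (fun u ↦ 1 / (1 - exp (-2 * c ^ 2 * u ^ 2))) (Ioi 0) :=
  continuousOn_const.div (by fun_prop) fun _ hu ↦
    (one_sub_exp_neg_mul_sq_pos hc (ne_of_gt hu)).ne'

theorem one_div_one_sub_exp_le_of_le (hc : 0 < c) (hu : 0 < u) (hcu : u ≤ 1 / (2 * c)) :
    1 / (1 - exp (-2 * c ^ 2 * u ^ 2)) ≤ 2 / (3 * c ^ 2) * u ^ (-2 : ℤ) := by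
  have hcu' : c * u ≤ 1 / 2 := by
    rw [le_div_iff₀ (by positivity)] at hcu
    linarith
  have ht : 2 * c ^ 2 * u ^ 2 ≤ 1 / 2 := by nlinarith [mul_pos hc hu]
  have hlow := three_quarters_mul_le_one_sub_exp_neg (by positivity) ht
  rw [show -(2 * c ^ 2 * u ^ 2) = -2 * c ^ 2 * u ^ 2 by ring] at hlow
  calc 1 / (1 - exp (-2 * c ^ 2 * u ^ 2))
      ≤ 1 / (3 / 4 * (2 * c ^ 2 * u ^ 2)) := one_div_le_one_div_of_le (by positivity) hlow
    _ = 2 / (3 * c ^ 2) * u ^ (-2 : ℤ) := by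
      rw [zpow_neg, zpow_two]
      field_simp
      ring

theorem one_div_one_sub_exp_le_of_ge (hc : 0 < c) (hcu : 1 / (2 * c) ≤ u) :
    1 / (1 - exp (-2 * c ^ 2 * u ^ 2)) ≤ 1 / (1 - exp (-1 / 2)) := by
  have hcu' : 1 / 2 ≤ c * u := by
    rw [div_le_iff₀ (by positivity)] at hcu
    linarith
  have ht : 1 / 2 ≤ 2 * c ^ 2 * u ^ 2 := by nlinarith
  have hpos : 0 < 1 - exp (-1 / 2) := by
    rw [sub_pos, exp_lt_one_iff]
    norm_num
  refine one_div_le_one_div_of_le hpos (sub_le_sub_left (exp_le_exp.2 ?_) 1)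
  linarith

end Integrand

theorem integral_one_div_one_sub_exp_le {c δ : ℝ} (hc : 0 < c) (hδ : 0 < δ)
    (hδc : δ ≤ 1 / (2 * c)) :
    ∫ u in δ..(1 / c), 1 / (1 - exp (-2 * c ^ 2 * u ^ 2))
      ≤ 2 / (3 * c ^ 2 * δ) - 4 / (3 * c) + 1 / (2 * c * (1 - exp (-1 / 2))) := by
  set f := fun u ↦ 1 / (1 - exp (-2 * c ^ 2 * u ^ 2))
  set m := 1 / (2 * c)
  have hm : 0 < m := by positivity
  have hmc : m ≤ 1 / c := one_div_le_one_div_of_le hc (by linarith)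
  have hint : ∀ {a b}, 0 < a → a ≤ b → IntervalIntegrable f MeasureTheory.volume a b :=
    fun ha hab ↦ ((continuousOn_one_div_one_sub_exp hc.ne').mono
      fun _ hx ↦ ha.trans_le hx.1).intervalIntegrable_of_Icc hab
  have hlow : ∫ u in δ..m, f u ≤ 2 / (3 * c ^ 2) * (δ⁻¹ - m⁻¹) := by
    rw [← integral_zpow_neg_two hδ hm, ← integral_const_mul]
    refine integral_mono_on hδc (hint hδ hδc) ?_ fun u hu ↦
      one_div_one_sub_exp_le_of_le hc (hδ.trans_le hu.1) hu.2
    exact (intervalIntegrable_zpow (Or.inr (notMem_uIcc_of_lt hδ hm))).const_mul _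
  have hhigh : ∫ u in m..(1 / c), f u ≤ (1 / c - m) * (1 / (1 - exp (-1 / 2))) := by
    rw [← smul_eq_mul, ← integral_const]
    exact integral_mono_on hmc (hint hm hmc) intervalIntegrable_const fun u hu ↦
      one_div_one_sub_exp_le_of_ge hc hu.1
  rw [← integral_add_adjacent_intervals (hint hδ hδc) (hint hm hmc)]
  have e₁ : 2 / (3 * c ^ 2) * (δ⁻¹ - m⁻¹) = 2 / (3 * c ^ 2 * δ) - 4 / (3 * c) := by
    simp only [m]
    field_simp
    ring
  have e₂ : (1 / c - m) * (1 / (1 - exp (-1 / 2))) = 1 / (2 * c * (1 - exp (-1 / 2))) := by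
    simp only [m]
    field_simp
    ring
  linarith

theorem stmt_3 (n K : ℝ) (hK : 0 < K) (hn : 0 < n)
    (c : ℝ) (hc : c = 1 - 1 / Real.sqrt 3)
    (δ₀ : ℝ) (hδ₀ : δ₀ = 2 * Real.sqrt (K / n)) (hδ₀le : δ₀ ≤ 1 / (2 * c)) :
    ∫ u in δ₀..(1 / c), 1 / (1 - Real.exp (-2 * c ^ 2 * u ^ 2))
      ≤ 2 / (3 * c ^ 2 * δ₀) - 4 / (3 * c) + 1 / (2 * c * (1 - Real.exp (-1 / 2))) := by
  have hc₀ : 0 < c := by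
    have : 1 < √3 := by rw [lt_sqrt zero_le_one]; norm_num
    rw [hc, sub_pos, div_lt_one (by positivity)]
    exact this
  have hδ₀pos : 0 < δ₀ := by rw [hδ₀]; positivity
  exact integral_one_div_one_sub_exp_le hc₀ hδ₀pos hδ₀le
end

section
/- Let $X_1, X_2, \ldots$ be i.i.d. 1-sub-Gaussian random variables with mean $\mu$ and let $\widehat{\gamma}_t = \mu - \frac{1}{t}\sum_{s=1}^t X_s$. Then for any $\epsilon > 0$ and integer $t \geq 1$, $\mathbb{E}\left[e^{t\widehat{\gamma}_t^2/3}\, \mathds{1}\{|\widehat{\gamma}_t| \geq \epsilon/3\}\right] \leq 6\, e^{-t\epsilon^2/54}$. -/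
/-!
Since the `X s - μ` are independent and 1-sub-Gaussian, `γ̂_t` is sub-Gaussian with variance
proxy `1/t`, so `P(|γ̂_t| ≥ u) ≤ 2 e^{-t u²/2}`. For `Y = e^{t γ̂_t² / 3}` this reads
`P(Y > x) ≤ 2 x^{-3/2}` for `x ≥ 1`. Splitting the layer-cake integral of `Y` over
`A = {|γ̂_t| ≥ ε/3}` at `y₀ = e^{t ε² / 27}` bounds it by
`y₀ P(A) + ∫_{y₀}^∞ 2 x^{-3/2} dx ≤ 2 e^{-tε²/54} + 4 y₀^{-1/2} = 6 e^{-tε²/54}`.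
-/

open MeasureTheory ProbabilityTheory Real Set

section MGF

variable {Ω : Type*} [MeasurableSpace Ω] {P : Measure Ω}

lemma mgf_sum_le_of_iIndepFun {ι : Type*} {Y : ι → Ω → ℝ} (h_indep : iIndepFun Y P)
    (h_meas : ∀ i, Measurable (Y i)) {c : ℝ}
    (hY : ∀ i l, mgf (Y i) P l ≤ exp (c * l ^ 2 / 2)) (s : Finset ι) (l : ℝ) :
    mgf (∑ i ∈ s, Y i) P l ≤ exp (s.card * c * l ^ 2 / 2) := by
  rw [h_indep.mgf_sum h_meas]
  calc ∏ i ∈ s, mgf (Y i) P l ≤ ∏ _i ∈ s, exp (c * l ^ 2 / 2) :=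
        Finset.prod_le_prod (fun _ _ => mgf_nonneg) (fun i _ => hY i l)
    _ = exp (s.card * c * l ^ 2 / 2) := by
        rw [Finset.prod_const, ← exp_nat_mul]; ring_nf

lemma mgf_le_of_identDistrib_of_forall_integral_le {X Y : Ω → ℝ}
    (hXY : IdentDistrib X Y P P) {μ c : ℝ}
    (hY : ∀ l : ℝ, ∫ ω, exp (l * (Y ω - μ)) ∂P ≤ exp (c * l ^ 2 / 2)) (l : ℝ) :
    mgf (fun ω => X ω - μ) P l ≤ exp (c * l ^ 2 / 2) := by
  have := ((hXY.comp (measurable_id.sub_const μ)).comp (measurable_const_mul l).exp).integral_eq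
  rw [mgf]
  exact this.trans_le (hY l)

lemma mgf_mean_sub_sampleMean_le {X : ℕ → Ω → ℝ} (hmeas : ∀ i, Measurable (X i))
    (hindep : iIndepFun X P) {μ c : ℝ}
    (hsubg : ∀ i l, mgf (fun ω => X i ω - μ) P l ≤ exp (c * l ^ 2 / 2)) {t : ℕ} (ht : 1 ≤ t)
    (l : ℝ) :
    mgf (fun ω => μ - (1 / t) * ∑ u ∈ Finset.Icc 1 t, X u ω) P l
      ≤ exp (c * l ^ 2 / (2 * t)) := by
  set Y : ℕ → Ω → ℝ := fun i ω => X i ω - μ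
  have hY : iIndepFun Y P :=
    hindep.comp (fun _ x => x - μ) (fun _ => measurable_id.sub_const μ)
  have ht' : (t : ℝ) ≠ 0 := Nat.cast_ne_zero.2 (by omega)
  have hmean : (fun ω => μ - (1 / t) * ∑ u ∈ Finset.Icc 1 t, X u ω)
      = fun ω => -(1 / (t : ℝ)) * (∑ u ∈ Finset.Icc 1 t, Y u) ω := by
    ext ω
    simp only [Y, Finset.sum_apply, Finset.sum_sub_distrib, Finset.sum_const, Nat.card_Icc,
      add_tsub_cancel_right, nsmul_eq_mul]
    field_simp; ring
  rw [hmean, mgf_const_mul]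
  refine (mgf_sum_le_of_iIndepFun hY (fun i => (hmeas i).sub_const μ) hsubg _ _).trans_eq ?_
  rw [Nat.card_Icc, add_tsub_cancel_right]
  congr 1
  field_simp

end MGF

section Integrability

variable {Ω : Type*} [MeasurableSpace Ω] {P : Measure Ω} {Z : Ω → ℝ}

lemma integrable_exp_mul_of_integrable_exp_mul_sq (hZ : AEStronglyMeasurable Z P) {a : ℝ}
    (ha : 0 < a) (h : Integrable (fun ω => exp (a * Z ω ^ 2)) P) (l : ℝ) :
    Integrable (fun ω => exp (l * Z ω)) P := by
  refine (h.const_mul (exp (l ^ 2 / (4 * a)))).mono' (by fun_prop) (ae_of_all _ fun ω => ?_)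
  rw [norm_of_nonneg (exp_nonneg _), ← exp_add, exp_le_exp]
  -- AM-GM: `l z ≤ a z² + l² / (4a)`
  have := sq_nonneg (2 * a * Z ω - l)
  rw [div_add' _ _ _ (by positivity), le_div_iff₀ (by positivity)]
  nlinarith

lemma integrable_exp_mul_sq_of_integrableOn [IsFiniteMeasure P] (hZ : Measurable Z) {a b : ℝ}
    (hb : 0 ≤ b) (h : IntegrableOn (fun ω => exp (b * Z ω ^ 2)) {ω | a ≤ |Z ω|} P) :
    Integrable (fun ω => exp (b * Z ω ^ 2)) P := by
  have hA : MeasurableSet {ω | a ≤ |Z ω|} := measurableSet_le measurable_const hZ.abs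
  have hcompl : IntegrableOn (fun ω => exp (b * Z ω ^ 2)) {ω | a ≤ |Z ω|}ᶜ P := by
    refine (integrable_const (exp (b * a ^ 2))).mono' (by fun_prop) ?_
    filter_upwards [self_mem_ae_restrict hA.compl] with ω hω
    have hlt : |Z ω| < a := not_le.1 hω
    rw [norm_of_nonneg (exp_nonneg _), exp_le_exp]
    have : Z ω ^ 2 ≤ a ^ 2 := sq_le_sq' (abs_lt.1 hlt).1.le (abs_lt.1 hlt).2.le
    exact mul_le_mul_of_nonneg_left this hb
  simpa using h.union hcompl

end Integrability

lemma ProbabilityTheory.HasSubgaussianMGF.measure_abs_ge_le {Ω : Type*} [MeasurableSpace Ω]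
    {P : Measure Ω} {Z : Ω → ℝ} {c : NNReal} (h : HasSubgaussianMGF Z c P) {u : ℝ}
    (hu : 0 ≤ u) :
    P.real {ω | u ≤ |Z ω|} ≤ 2 * exp (-u ^ 2 / (2 * c)) := by
  have hsplit : {ω | u ≤ |Z ω|} = {ω | u ≤ Z ω} ∪ {ω | u ≤ (-Z) ω} := by
    ext ω; simp [le_abs', le_neg, or_comm]
  calc P.real {ω | u ≤ |Z ω|} ≤ P.real {ω | u ≤ Z ω} + P.real {ω | u ≤ (-Z) ω} := by
        rw [hsplit]; exact measureReal_union_le _ _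
    _ ≤ exp (-u ^ 2 / (2 * c)) + exp (-u ^ 2 / (2 * c)) :=
        add_le_add (h.measure_ge_le hu) (h.neg.measure_ge_le hu)
    _ = 2 * exp (-u ^ 2 / (2 * c)) := by ring

lemma setLIntegral_le_mul_measure_add_lintegral_Ioi {α : Type*} [MeasurableSpace α]
    (μ : Measure α) {f : α → ℝ} (hf_nn : 0 ≤ f) (hf : Measurable f) (A : Set α) {y₀ : ℝ}
    (hy₀ : 0 ≤ y₀) :
    ∫⁻ ω in A, ENNReal.ofReal (f ω) ∂μ
      ≤ ENNReal.ofReal y₀ * μ A + ∫⁻ x in Ioi y₀, μ {ω | x < f ω} := by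
  rw [lintegral_eq_lintegral_meas_lt _ (ae_of_all _ hf_nn) hf.aemeasurable,
    ← Ioc_union_Ioi_eq_Ioi hy₀, lintegral_union measurableSet_Ioi (Ioc_disjoint_Ioi le_rfl)]
  refine add_le_add ?_ (lintegral_mono fun x => Measure.restrict_le_self _)
  calc ∫⁻ x in Ioc 0 y₀, μ.restrict A {ω | x < f ω} ≤ ∫⁻ _ in Ioc 0 y₀, μ A :=
        lintegral_mono fun _ =>
          (measure_mono (subset_univ _)).trans_eq (Measure.restrict_apply_univ A)
    _ = ENNReal.ofReal y₀ * μ A := by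
        rw [setLIntegral_const, Real.volume_Ioc, sub_zero, mul_comm]

lemma lintegral_Ioi_ofReal_rpow_of_lt {a c : ℝ} (ha : a < -1) (hc : 0 < c) :
    ∫⁻ x in Ioi c, ENNReal.ofReal (x ^ a) = ENNReal.ofReal (-c ^ (a + 1) / (a + 1)) := by
  rw [← integral_Ioi_rpow_of_lt ha hc, ofReal_integral_eq_lintegral_ofReal
    (integrableOn_Ioi_rpow_of_lt ha hc)]
  filter_upwards [self_mem_ae_restrict measurableSet_Ioi] with x hx
  exact rpow_nonneg (hc.trans hx).le _

section GaussianTail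

variable {Ω : Type*} [MeasurableSpace Ω] {P : Measure Ω} {Z : Ω → ℝ} {t : ℝ}

lemma measure_lt_exp_mul_sq_le (ht : 0 < t)
    (htail : ∀ u, 0 ≤ u → P {ω | u ≤ |Z ω|} ≤ ENNReal.ofReal (2 * exp (-t * u ^ 2 / 2)))
    {x : ℝ} (hx : 1 ≤ x) :
    P {ω | x < exp (t * Z ω ^ 2 / 3)} ≤ ENNReal.ofReal (2 * x ^ (-(3 / 2) : ℝ)) := by
  have hx₀ : 0 < x := one_pos.trans_le hx
  set u := √(3 * log x / t)
  have hsub : {ω | x < exp (t * Z ω ^ 2 / 3)} ⊆ {ω | u ≤ |Z ω|} := by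
    intro ω hω
    have : 3 * log x / t ≤ Z ω ^ 2 := by
      rw [div_le_iff₀ ht]
      linarith [(log_lt_iff_lt_exp hx₀).2 hω]
    simpa only [mem_ofPred_eq, sqrt_sq_eq_abs] using sqrt_le_sqrt this
  have hu : -t * u ^ 2 / 2 = -(3 / 2) * log x := by
    rw [sq_sqrt (by have := log_nonneg hx; positivity)]
    field_simp
  calc P {ω | x < exp (t * Z ω ^ 2 / 3)} ≤ P {ω | u ≤ |Z ω|} := measure_mono hsub
    _ ≤ ENNReal.ofReal (2 * exp (-t * u ^ 2 / 2)) := htail u (sqrt_nonneg _)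
    _ = ENNReal.ofReal (2 * x ^ (-(3 / 2) : ℝ)) := by
        rw [hu, rpow_def_of_pos hx₀, mul_comm (log x)]

lemma setLIntegral_exp_mul_sq_le (hZ : Measurable Z) (ht : 0 < t)
    (htail : ∀ u, 0 ≤ u → P {ω | u ≤ |Z ω|} ≤ ENNReal.ofReal (2 * exp (-t * u ^ 2 / 2)))
    {a : ℝ} (ha : 0 ≤ a) :
    ∫⁻ ω in {ω | a ≤ |Z ω|}, ENNReal.ofReal (exp (t * Z ω ^ 2 / 3)) ∂P
      ≤ ENNReal.ofReal (6 * exp (-t * a ^ 2 / 6)) := by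
  set y₀ := exp (t * a ^ 2 / 3)
  have hy₀ : 1 ≤ y₀ := one_le_exp (by positivity)
  have hIoi : ∫⁻ x in Ioi y₀, P {ω | x < exp (t * Z ω ^ 2 / 3)}
      ≤ ENNReal.ofReal (4 * exp (-t * a ^ 2 / 6)) := by
    calc ∫⁻ x in Ioi y₀, P {ω | x < exp (t * Z ω ^ 2 / 3)}
        ≤ ∫⁻ x in Ioi y₀, ENNReal.ofReal 2 * ENNReal.ofReal (x ^ (-(3 / 2) : ℝ)) := by
          refine setLIntegral_mono' measurableSet_Ioi fun x hx => ?_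
          rw [← ENNReal.ofReal_mul zero_le_two]
          exact measure_lt_exp_mul_sq_le ht htail (hy₀.trans (le_of_lt hx))
      _ = ENNReal.ofReal (4 * exp (-t * a ^ 2 / 6)) := by
          rw [lintegral_const_mul' _ _ ENNReal.ofReal_ne_top,
            lintegral_Ioi_ofReal_rpow_of_lt (by norm_num) (exp_pos _),
            ← ENNReal.ofReal_mul zero_le_two, ← exp_mul]
          congr 1
          norm_num
          ring_nf
  calc ∫⁻ ω in {ω | a ≤ |Z ω|}, ENNReal.ofReal (exp (t * Z ω ^ 2 / 3)) ∂P
      ≤ ENNReal.ofReal y₀ * P {ω | a ≤ |Z ω|}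
          + ∫⁻ x in Ioi y₀, P {ω | x < exp (t * Z ω ^ 2 / 3)} :=
        setLIntegral_le_mul_measure_add_lintegral_Ioi P (fun _ => (exp_pos _).le) (by fun_prop) _
          (exp_pos _).le
    _ ≤ ENNReal.ofReal y₀ * ENNReal.ofReal (2 * exp (-t * a ^ 2 / 2))
          + ENNReal.ofReal (4 * exp (-t * a ^ 2 / 6)) := by
        gcongr
        exact htail a ha
    _ = ENNReal.ofReal (6 * exp (-t * a ^ 2 / 6)) := by
        rw [← ENNReal.ofReal_mul (exp_pos _).le,
          ← ENNReal.ofReal_add (by positivity) (by positivity)]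
        congr 1
        rw [mul_left_comm, ← exp_add]
        ring_nf

end GaussianTail

theorem stmt_12 {Ω : Type*} [MeasurableSpace Ω] (P : Measure Ω) [IsProbabilityMeasure P]
    (X : ℕ → Ω → ℝ) (μ : ℝ)
    (hmeas : ∀ i, Measurable (X i))
    (hindep : iIndepFun X P)
    (hident : ∀ i, IdentDistrib (X i) (X 1) P P)
    (hsubg : ∀ l : ℝ, ∫ ω, Real.exp (l * (X 1 ω - μ)) ∂P ≤ Real.exp (l ^ 2 / 2))
    (γ : ℕ → Ω → ℝ) (hγ : ∀ s ω, γ s ω = μ - (1 / s) * ∑ u ∈ Finset.Icc 1 s, X u ω)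
    (ε : ℝ) (hε : 0 < ε) (t : ℕ) (ht : 1 ≤ t) :
    ∫ ω in {ω | ε / 3 ≤ |γ t ω|}, Real.exp ((t : ℝ) * (γ t ω) ^ 2 / 3) ∂P
      ≤ 6 * Real.exp (-(t : ℝ) * ε ^ 2 / 54) := by
  have ht₀ : (0 : ℝ) < t := by exact_mod_cast ht
  have hγt : γ t = fun ω => μ - (1 / t) * ∑ u ∈ Finset.Icc 1 t, X u ω := funext (hγ t)
  have hγ_meas : Measurable (γ t) := by rw [hγt]; fun_prop
  -- Without integrability the Bochner integral is `0`. With it, `exp (t γ² / 3)` dominates every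
  -- `exp (l γ)`: a Bochner-integral bound on the MGF alone would not give these moments.
  by_cases hint : IntegrableOn (fun ω => exp (t * γ t ω ^ 2 / 3)) {ω | ε / 3 ≤ |γ t ω|} P
  swap
  · rw [integral_undef hint]; positivity
  have hsubG : HasSubgaussianMGF (γ t) (t : NNReal)⁻¹ P := by
    simp_rw [mul_div_right_comm _ _ (3 : ℝ)] at hint
    refine ⟨integrable_exp_mul_of_integrable_exp_mul_sq hγ_meas.aestronglyMeasurable
      (by positivity) (integrable_exp_mul_sq_of_integrableOn hγ_meas (by positivity) hint),
      fun l => ?_⟩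
    have hX i := mgf_le_of_identDistrib_of_forall_integral_le (hident i) (c := 1)
      (by simpa using hsubg)
    rw [hγt]
    refine (mgf_mean_sub_sampleMean_le hmeas hindep hX ht l).trans_eq ?_
    simp only [NNReal.coe_inv, NNReal.coe_natCast]
    field_simp
  have htail u (hu : 0 ≤ u) :
      P {ω | u ≤ |γ t ω|} ≤ ENNReal.ofReal (2 * exp (-t * u ^ 2 / 2)) := by
    rw [← ofReal_measureReal]
    refine ENNReal.ofReal_le_ofReal ((hsubG.measure_abs_ge_le hu).trans_eq ?_)
    simp only [NNReal.coe_inv, NNReal.coe_natCast]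
    field_simp
  rw [integral_eq_lintegral_of_nonneg_ae (ae_of_all _ fun _ => (exp_pos _).le) (by fun_prop)]
  refine ENNReal.toReal_le_of_le_ofReal (by positivity) ?_
  refine (setLIntegral_exp_mul_sq_le hγ_meas ht₀ htail (by positivity)).trans_eq ?_
  ring_nf
end

section
/- Let $\Delta, \epsilon > 0$ with $\Delta \geq \epsilon$, and let $T$ be an integer with $T \geq \frac{6}{\Delta^2}\log\left(\frac{e^6 \Delta}{\epsilon}\right)$ (so in particular $T \geq 36/\Delta^2$). Then for any real $\gamma$ with $\gamma \leq \Delta/4$, $\int_{\gamma - \Delta + \epsilon}^{\infty} \exp\left(-\frac{T}{3}\left(v^2 - (\gamma - \Delta)^2\right)\right) dv \geq e^{T\Delta^2/6} \cdot \frac{2}{\Delta T}$. -/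
/-!
Factoring out `exp ((T/3)(γ - Δ)²)` leaves the Gaussian `exp (-c v²)` with `c = T/3`. Since the
lower limit is at most `x = Δ/4`, the integral dominates the tail beyond `x`, and that tail is at
least `(1/(2cx) - 1/(4c²x³)) exp (-c x²)`: the derivative of this expression is
`-(1 - 3/(4c²v⁴)) exp (-c v²) ≥ -exp (-c v²)` and it vanishes at infinity. As
`(γ - Δ)² ≥ (3Δ/4)²`, the exponents add up to at least `TΔ²/6`, and the prefactor
`(6/(TΔ)) (1 - 24/(TΔ²))` is at least `2/(TΔ)` once `TΔ² ≥ 36`, which holds because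
`log (e⁶Δ/ε) ≥ 6`.
-/

open MeasureTheory Set Filter Topology Real

section GaussianTail

variable {c : ℝ}

theorem hasDerivAt_gaussianTailBound (hc : c ≠ 0) {v : ℝ} (hv : v ≠ 0) :
    HasDerivAt (fun v => (1 / (2 * c * v) - 1 / (4 * c ^ 2 * v ^ 3)) * exp (-c * v ^ 2))
      ((3 / (4 * c ^ 2 * v ^ 4) - 1) * exp (-c * v ^ 2)) v := by
  have hpoly : HasDerivAt (fun v => (2 * c)⁻¹ * v⁻¹ - (4 * c ^ 2)⁻¹ * (v ^ 3)⁻¹)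
      ((2 * c)⁻¹ * -(v ^ 2)⁻¹ - (4 * c ^ 2)⁻¹ * (-(3 * v ^ 2) / (v ^ 3) ^ 2)) v :=
    ((hasDerivAt_inv hv).const_mul _).sub
      (((hasDerivAt_pow 3 v).inv (pow_ne_zero 3 hv)).const_mul _)
  have hexp : HasDerivAt (fun v => exp (-c * v ^ 2)) (exp (-c * v ^ 2) * (-c * (2 * v))) v := by
    simpa using ((hasDerivAt_pow 2 v).const_mul (-c)).exp
  rw [show (fun v => (1 / (2 * c * v) - 1 / (4 * c ^ 2 * v ^ 3)) * exp (-c * v ^ 2)) =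
      fun v => ((2 * c)⁻¹ * v⁻¹ - (4 * c ^ 2)⁻¹ * (v ^ 3)⁻¹) * exp (-c * v ^ 2) by
    funext v; ring]
  exact (hpoly.mul hexp).congr_deriv (by field_simp; ring)

theorem tendsto_gaussianTailBound_atTop (hc : 0 < c) :
    Tendsto (fun v => (1 / (2 * c * v) - 1 / (4 * c ^ 2 * v ^ 3)) * exp (-c * v ^ 2))
      atTop (𝓝 0) := by
  have hpoly : Tendsto (fun v : ℝ => 1 / (2 * c * v) - 1 / (4 * c ^ 2 * v ^ 3)) atTop (𝓝 0) := by
    have h1 := tendsto_inv_atTop_zero.comp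
      (tendsto_id.const_mul_atTop (by positivity : 0 < 2 * c))
    have h3 := tendsto_inv_atTop_zero.comp
      ((tendsto_pow_atTop (by norm_num : 3 ≠ 0)).const_mul_atTop (by positivity : 0 < 4 * c ^ 2))
    simpa [Function.comp_def] using h1.sub h3
  have hexp : Tendsto (fun v : ℝ => exp (-c * v ^ 2)) atTop (𝓝 0) := by
    refine tendsto_exp_atBot.comp ?_
    exact (tendsto_pow_atTop two_ne_zero).const_mul_atTop_of_neg (neg_neg_of_pos hc)
  simpa using hpoly.mul hexp

theorem integrableOn_gaussianTailBound_deriv (hc : 0 < c) {x : ℝ} (hx : 0 < x) :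
    IntegrableOn (fun v => (3 / (4 * c ^ 2 * v ^ 4) - 1) * exp (-c * v ^ 2)) (Ioi x) := by
  refine (integrable_exp_neg_mul_sq hc).integrableOn.bdd_mul (c := 3 / (4 * c ^ 2 * x ^ 4) + 1)
    (by fun_prop : Measurable fun v : ℝ => 3 / (4 * c ^ 2 * v ^ 4) - 1).aestronglyMeasurable ?_
  filter_upwards [ae_restrict_mem measurableSet_Ioi] with v hv
  have hxv : x ^ 4 ≤ v ^ 4 := pow_le_pow_left₀ hx.le (le_of_lt hv) 4
  have hle : 3 / (4 * c ^ 2 * v ^ 4) ≤ 3 / (4 * c ^ 2 * x ^ 4) := by gcongr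
  have hnonneg : 0 ≤ 3 / (4 * c ^ 2 * v ^ 4) := by positivity
  rw [Real.norm_eq_abs, abs_le]
  constructor <;> linarith

theorem le_integral_Ioi_exp_neg_mul_sq (hc : 0 < c) {x : ℝ} (hx : 0 < x) :
    (1 / (2 * c * x) - 1 / (4 * c ^ 2 * x ^ 3)) * exp (-c * x ^ 2) ≤
      ∫ v in Ioi x, exp (-c * v ^ 2) := by
  have hint := integrableOn_gaussianTailBound_deriv hc hx
  have hFTC := integral_Ioi_of_hasDerivAt_of_tendsto'
    (fun v hv => hasDerivAt_gaussianTailBound hc.ne' (hx.trans_le hv).ne') hint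
    (tendsto_gaussianTailBound_atTop hc)
  calc (1 / (2 * c * x) - 1 / (4 * c ^ 2 * x ^ 3)) * exp (-c * x ^ 2)
      = ∫ v in Ioi x, -((3 / (4 * c ^ 2 * v ^ 4) - 1) * exp (-c * v ^ 2)) := by
        rw [integral_neg, hFTC, zero_sub, neg_neg]
    _ ≤ ∫ v in Ioi x, exp (-c * v ^ 2) := by
        refine setIntegral_mono_on hint.neg (integrable_exp_neg_mul_sq hc).integrableOn
          measurableSet_Ioi fun v _ => ?_
        have : 0 ≤ 3 / (4 * c ^ 2 * v ^ 4) * exp (-c * v ^ 2) := by positivity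
        linarith

end GaussianTail

theorem exp_mul_div_le_integral_Ioi_exp {Δ T a b : ℝ} (hΔ : 0 < Δ) (hTΔ : 36 ≤ T * Δ ^ 2)
    (ha : a ≤ Δ / 4) (hb : (3 * Δ / 4) ^ 2 ≤ b ^ 2) :
    exp (T * Δ ^ 2 / 6) * (2 / (Δ * T)) ≤ ∫ v in Ioi a, exp (-(T / 3) * (v ^ 2 - b ^ 2)) := by
  have hT : 0 < T := by nlinarith [sq_nonneg Δ]
  have hexp : exp (T * Δ ^ 2 / 6) ≤ exp (T / 3 * b ^ 2) * exp (-(T / 3) * (Δ / 4) ^ 2) := by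
    rw [← exp_add, exp_le_exp]
    nlinarith
  have hcoeff :
      2 / (Δ * T) ≤ 1 / (2 * (T / 3) * (Δ / 4)) - 1 / (4 * (T / 3) ^ 2 * (Δ / 4) ^ 3) := by
    rw [div_le_iff₀ (by positivity)]
    field_simp
    nlinarith
  calc exp (T * Δ ^ 2 / 6) * (2 / (Δ * T))
      ≤ exp (T / 3 * b ^ 2) * exp (-(T / 3) * (Δ / 4) ^ 2) *
          (1 / (2 * (T / 3) * (Δ / 4)) - 1 / (4 * (T / 3) ^ 2 * (Δ / 4) ^ 3)) :=
        mul_le_mul hexp hcoeff (by positivity) (by positivity)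
    _ = exp (T / 3 * b ^ 2) * ((1 / (2 * (T / 3) * (Δ / 4)) -
          1 / (4 * (T / 3) ^ 2 * (Δ / 4) ^ 3)) * exp (-(T / 3) * (Δ / 4) ^ 2)) := by ring
    _ ≤ exp (T / 3 * b ^ 2) * ∫ v in Ioi (Δ / 4), exp (-(T / 3) * v ^ 2) := by
        gcongr
        exact le_integral_Ioi_exp_neg_mul_sq (by positivity) (by positivity)
    _ ≤ exp (T / 3 * b ^ 2) * ∫ v in Ioi a, exp (-(T / 3) * v ^ 2) := by
        have hc : 0 < T / 3 := by positivity
        exact mul_le_mul_of_nonneg_left (setIntegral_mono_set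
          (integrable_exp_neg_mul_sq hc).integrableOn (.of_forall fun _ => (exp_pos _).le)
          (Ioi_subset_Ioi ha).eventuallyLE) (exp_pos _).le
    _ = ∫ v in Ioi a, exp (-(T / 3) * (v ^ 2 - b ^ 2)) := by
        rw [← integral_const_mul]
        congr with v
        rw [← exp_add]
        ring_nf

theorem stmt_14 (Δ ε : ℝ) (hε : 0 < ε) (hΔε : ε ≤ Δ) (T : ℕ)
    (hT : 6 / Δ ^ 2 * Real.log (Real.exp 6 * Δ / ε) ≤ (T : ℝ))
    (γ : ℝ) (hγ : γ ≤ Δ / 4) :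
    ∫ v in Set.Ioi (γ - Δ + ε),
        Real.exp (-((T : ℝ) / 3) * (v ^ 2 - (γ - Δ) ^ 2))
      ≥ Real.exp ((T : ℝ) * Δ ^ 2 / 6) * (2 / (Δ * T)) := by
  have hΔ : 0 < Δ := hε.trans_le hΔε
  have hlog : 6 ≤ log (exp 6 * Δ / ε) := by
    rw [mul_div_assoc, log_mul (exp_pos 6).ne' (by positivity), log_exp]
    linarith [log_nonneg ((one_le_div hε).2 hΔε)]
  have hTΔ : 36 ≤ (T : ℝ) * Δ ^ 2 := by
    have : 36 / Δ ^ 2 ≤ (T : ℝ) :=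
      calc 36 / Δ ^ 2 = 6 / Δ ^ 2 * 6 := by ring
        _ ≤ 6 / Δ ^ 2 * log (exp 6 * Δ / ε) := by gcongr
        _ ≤ T := hT
    rwa [div_le_iff₀ (by positivity)] at this
  exact exp_mul_div_le_integral_Ioi_exp hΔ hTΔ (by linarith) (by nlinarith)
end

section
/- Let $X_1, X_2, \ldots$ be i.i.d. random variables in $[0,1]$ with mean $\mu$, and for $s \geq 1$ define $\widehat{\mu}_s = \frac{1}{s}\sum_{t=1}^s X_t$ and $B_s = \widehat{\mu}_s + \sqrt{\log_+(n/(Ks))/s}$ where $\log_+(x) = \log(x)\mathds{1}\{x \geq 1\}$ and $n \geq K \geq 1$. Then for any random time $T \in \{0,1,\ldots,n\}$ and any $u \geq 2\sqrt{K/n}$, $\mathbb{P}(\mu - B_T \geq u) \leq \frac{4K}{nu^2}\log\left(\sqrt{\frac{n}{K}}u\right) + \frac{1}{nu^2/K - 1}$. -/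
open MeasureTheory ProbabilityTheory

/-- integrable of bounded measurable on probability measure -/
lemma my_intbdd {Ω : Type*} [MeasurableSpace Ω] (P : Measure Ω) [IsProbabilityMeasure P]
    {f : Ω → ℝ} (hf : AEStronglyMeasurable f P) {C : ℝ} (hC : ∀ ω, |f ω| ≤ C) :
    Integrable f P :=
  (integrable_const C).mono' hf (Filter.Eventually.of_forall hC)

/-- Hoeffding's scalar lemma -/
lemma my_hoeff_scalar (p : ℝ) (hp0 : 0 ≤ p) (hp1 : p ≤ 1) (t : ℝ) :
    (1 - p + p * Real.exp t) * Real.exp (-(p * t)) ≤ Real.exp (t ^ 2 / 8) := by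
  set c : ℝ → ℝ := fun s => 1 - p + p * Real.exp s with hc
  have hcpos : ∀ s, 0 < c s := by
    intro s
    rcases eq_or_lt_of_le hp0 with h | h
    · simp [hc, ← h]
    · have := Real.exp_pos s
      have : 0 < p * Real.exp s := by positivity
      simp only [hc]; linarith
  set q : ℝ → ℝ := fun s => p * Real.exp s / c s with hqdef
  set g : ℝ → ℝ := fun s => s ^ 2 / 8 + p * s - Real.log (c s) with hg
  set g' : ℝ → ℝ := fun s => s / 4 + p - q s with hg'
  have hcd : ∀ s, HasDerivAt c (p * Real.exp s) s := by
    intro s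
    exact ((Real.hasDerivAt_exp s).const_mul p).const_add (1 - p)
  have hderiv : ∀ s, HasDerivAt g (g' s) s := by
    intro s
    have h1 : HasDerivAt (fun s : ℝ => s ^ 2 / 8 + p * s) (s / 4 + p) s := by
      have := ((hasDerivAt_pow 2 s).div_const 8).add ((hasDerivAt_id s).const_mul p)
      exact this.congr_deriv (by norm_num; ring)
    have h2 : HasDerivAt (fun s => Real.log (c s)) (p * Real.exp s / c s) s :=
      (hcd s).log (hcpos s).ne'
    exact h1.sub h2
  have hq0 : ∀ s, 0 ≤ q s := fun s => by
    have := (hcpos s).le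
    have := (Real.exp_pos s).le
    positivity
  have hq1 : ∀ s, q s ≤ 1 := by
    intro s
    rw [hqdef]
    rw [div_le_one (hcpos s)]
    simp only [hc]
    linarith
  have hderiv2 : ∀ s, HasDerivAt g' (1 / 4 - q s * (1 - q s)) s := by
    intro s
    have hq : HasDerivAt q (q s * (1 - q s)) s := by
      have := ((Real.hasDerivAt_exp s).const_mul p).div (hcd s) (hcpos s).ne'
      refine this.congr_deriv ?_
      have hcs := (hcpos s).ne'
      rw [hqdef]
      field_simp
    have h1 : HasDerivAt (fun s : ℝ => s / 4 + p) (1 / 4) s := by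
      simpa using ((hasDerivAt_id s).div_const 4).add_const p
    exact h1.sub hq
  have hg''nonneg : ∀ s, 0 ≤ 1 / 4 - q s * (1 - q s) := by
    intro s
    nlinarith [sq_nonneg (q s - 1 / 2)]
  have hmono : Monotone g' :=
    monotone_of_deriv_nonneg (fun s => (hderiv2 s).differentiableAt)
      (fun s => by rw [(hderiv2 s).deriv]; exact hg''nonneg s)
  have hc0 : c 0 = 1 := by simp [hc]
  have hg'0 : g' 0 = 0 := by
    simp [hg', hqdef, hc0]
  have hgdiff : Differentiable ℝ g := fun s => (hderiv s).differentiableAt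
  have hg0 : g 0 = 0 := by simp [hg, hc0]
  have key : 0 ≤ g t := by
    rcases le_total 0 t with h | h
    · have hmon : MonotoneOn g (Set.Ici 0) := by
        apply monotoneOn_of_deriv_nonneg (convex_Ici 0) hgdiff.continuous.continuousOn
          (fun x _ => (hgdiff x).differentiableWithinAt)
        intro x hx
        rw [interior_Ici] at hx
        rw [(hderiv x).deriv]
        have := hmono (le_of_lt hx)
        rw [hg'0] at this
        exact this
      have := hmon Set.self_mem_Ici h h
      rwa [hg0] at this
    · have hant : AntitoneOn g (Set.Iic 0) := by
        apply antitoneOn_of_deriv_nonpos (convex_Iic 0) hgdiff.continuous.continuousOn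
          (fun x _ => (hgdiff x).differentiableWithinAt)
        intro x hx
        rw [interior_Iic] at hx
        rw [(hderiv x).deriv]
        have := hmono (le_of_lt hx)
        rw [hg'0] at this
        exact this
      have := hant h Set.self_mem_Iic h
      rwa [hg0] at this
  have key' : 0 ≤ t ^ 2 / 8 + p * t - Real.log (c t) := key
  have hle : Real.log (c t) ≤ t ^ 2 / 8 + p * t := by linarith
  have h2 : c t ≤ Real.exp (t ^ 2 / 8 + p * t) := (Real.log_le_iff_le_exp (hcpos t)).mp hle
  calc (1 - p + p * Real.exp t) * Real.exp (-(p * t))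
      = c t * Real.exp (-(p * t)) := rfl
    _ ≤ Real.exp (t ^ 2 / 8 + p * t) * Real.exp (-(p * t)) :=
        mul_le_mul_of_nonneg_right h2 (Real.exp_nonneg _)
    _ = Real.exp (t ^ 2 / 8) := by rw [← Real.exp_add]; ring_nf

/-- mgf bound for a [0,1] variable -/
lemma my_mgf_one {Ω : Type*} [MeasurableSpace Ω] (P : Measure Ω) [IsProbabilityMeasure P]
    {W : Ω → ℝ} (hW : Measurable W) (hr : ∀ ω, W ω ∈ Set.Icc (0 : ℝ) 1)
    {p : ℝ} (hp : ∫ ω, W ω ∂P = p) (l : ℝ) :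
    ∫ ω, Real.exp (l * (p - W ω)) ∂P ≤ Real.exp (l ^ 2 / 8) := by
  have hWint : Integrable W P :=
    my_intbdd P hW.aestronglyMeasurable (C := 1) (fun ω => abs_le.2 ⟨by linarith [(hr ω).1], (hr ω).2⟩)
  have hp0 : 0 ≤ p := hp ▸ integral_nonneg (fun ω => (hr ω).1)
  have hp1 : p ≤ 1 := by
    rw [← hp]
    calc ∫ ω, W ω ∂P ≤ ∫ _, (1 : ℝ) ∂P := integral_mono hWint (integrable_const 1) (fun ω => (hr ω).2)
      _ = 1 := by simp
  -- pointwise convexity bound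
  have hpt : ∀ ω, Real.exp (-l * W ω) ≤ 1 + W ω * (Real.exp (-l) - 1) := by
    intro ω
    have h01 : W ω ∈ Set.Icc (0:ℝ) 1 := hr ω
    have := convexOn_exp.2 (Set.mem_univ (0:ℝ)) (Set.mem_univ (-l))
      (by linarith [h01.2] : (0:ℝ) ≤ 1 - W ω) h01.1 (by ring)
    simp only [smul_eq_mul, mul_zero, zero_add, Real.exp_zero] at this
    calc Real.exp (-l * W ω) = Real.exp ((1 - W ω) * 0 + W ω * (-l)) := by ring_nf
      _ ≤ (1 - W ω) * 1 + W ω * Real.exp (-l) := by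
          simpa using this
      _ = 1 + W ω * (Real.exp (-l) - 1) := by ring
  have hintexp : Integrable (fun ω => Real.exp (-l * W ω)) P := by
    apply my_intbdd P (C := Real.exp |l|)
    · exact (Real.measurable_exp.comp (hW.const_mul (-l))).aestronglyMeasurable
    · intro ω
      rw [abs_of_pos (Real.exp_pos _), Real.exp_le_exp]
      calc -l * W ω ≤ |(-l) * W ω| := le_abs_self _
        _ = |l| * |W ω| := by rw [abs_mul, abs_neg]
        _ ≤ |l| * 1 := by
            apply mul_le_mul_of_nonneg_left _ (abs_nonneg l)
            exact abs_le.2 ⟨by linarith [(hr ω).1], (hr ω).2⟩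
        _ = |l| := mul_one _
  have hint2 : ∫ ω, Real.exp (-l * W ω) ∂P ≤ 1 + p * (Real.exp (-l) - 1) := by
    calc ∫ ω, Real.exp (-l * W ω) ∂P
        ≤ ∫ ω, (1 + W ω * (Real.exp (-l) - 1)) ∂P := by
          apply integral_mono hintexp _ hpt
          exact (integrable_const 1).add (hWint.mul_const _)
      _ = 1 + p * (Real.exp (-l) - 1) := by
          rw [integral_add (integrable_const 1) (hWint.mul_const _), integral_const,
            integral_mul_const, hp]
          simp
  have hfactor : ∀ ω, Real.exp (l * (p - W ω)) = Real.exp (l * p) * Real.exp (-l * W ω) := by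
    intro ω; rw [← Real.exp_add]; ring_nf
  calc ∫ ω, Real.exp (l * (p - W ω)) ∂P
      = Real.exp (l * p) * ∫ ω, Real.exp (-l * W ω) ∂P := by
        simp_rw [hfactor]; exact integral_const_mul _ _
    _ ≤ Real.exp (l * p) * (1 + p * (Real.exp (-l) - 1)) :=
        mul_le_mul_of_nonneg_left hint2 (Real.exp_nonneg _)
    _ = (1 - p + p * Real.exp (-l)) * Real.exp (-(p * (-l))) := by ring_nf
    _ ≤ Real.exp ((-l) ^ 2 / 8) := my_hoeff_scalar p hp0 hp1 (-l)
    _ = Real.exp (l ^ 2 / 8) := by ring_nf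

/-- exp (-x) ≤ 4 / (2+x)^2 for x ≥ 0 -/
lemma my_expneg {x : ℝ} (hx : 0 ≤ x) : Real.exp (-x) ≤ 4 / (2 + x) ^ 2 := by
  have h1 : 1 + x / 2 ≤ Real.exp (x / 2) := by linarith [Real.add_one_le_exp (x / 2)]
  have h2 : (1 + x / 2) ^ 2 ≤ Real.exp (x / 2) ^ 2 := by
    apply pow_le_pow_left₀ (by linarith) h1
  have h3 : Real.exp (x / 2) ^ 2 = Real.exp x := by
    rw [sq, ← Real.exp_add]; ring_nf
  have h4 : (2 + x) ^ 2 / 4 ≤ Real.exp x := by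
    rw [← h3]; nlinarith [h2]
  have h5 : (0:ℝ) < (2 + x) ^ 2 / 4 := by positivity
  rw [Real.exp_neg]
  calc (Real.exp x)⁻¹ ≤ ((2 + x) ^ 2 / 4)⁻¹ := by
        apply inv_anti₀ h5 h4
    _ = 4 / (2 + x) ^ 2 := by rw [inv_div]
  
/-- main numeric bound helper: exp(-t) ≤ (1/2.7182818283) * (4/(1+t0)^2) when t ≥ t0 ≥ 1 -/
lemma my_expneg2 {t t0 : ℝ} (h1 : 1 ≤ t0) (h : t0 ≤ t) :
    Real.exp (-t) ≤ (1 / 2.7182818283) * (4 / (1 + t0) ^ 2) := by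
  have he : Real.exp (-1) ≤ 1 / 2.7182818283 := by
    rw [Real.exp_neg]
    rw [inv_le_iff_one_le_mul₀ (Real.exp_pos 1)]
    rw [div_mul_eq_mul_div, le_div_iff₀ (by norm_num)]
    nlinarith [Real.exp_one_gt_d9]
  calc Real.exp (-t) ≤ Real.exp (-1) * Real.exp (-(t0 - 1)) := by
        rw [← Real.exp_add]
        apply Real.exp_le_exp.2; linarith
    _ ≤ (1 / 2.7182818283) * (4 / (1 + t0) ^ 2) := by
        apply mul_le_mul he _ (Real.exp_nonneg _) (by norm_num)
        have := my_expneg (x := t0 - 1) (by linarith)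
        rw [show (1:ℝ) + t0 = 2 + (t0 - 1) by ring]
        exact this

def sigA {Ω : Type*} (X : ℕ → Ω → ℝ) (S : Set ℕ) : MeasurableSpace Ω :=
  ⨆ i ∈ S, MeasurableSpace.comap (X i) inferInstance

/-- Maximal Hoeffding inequality via first-crossing decomposition -/
lemma my_maximal {Ω : Type*} [mΩ : MeasurableSpace Ω] (P : Measure Ω) [IsProbabilityMeasure P]
    (X : ℕ → Ω → ℝ) (μ : ℝ)
    (hmeas : ∀ i, Measurable (X i))
    (hrange : ∀ i ω, X i ω ∈ Set.Icc (0 : ℝ) 1)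
    (hindep : iIndepFun X P)
    (hident : ∀ i, IdentDistrib (X i) (X 1) P P)
    (hmean : ∫ ω, X 1 ω ∂P = μ)
    (m : ℕ) (hm : 1 ≤ m) (a : ℝ) (ha : 0 < a) :
    (P {ω | ∃ s, 1 ≤ s ∧ s ≤ m ∧ a ≤ ∑ t ∈ Finset.Icc 1 s, (μ - X t ω)}).toReal
      ≤ Real.exp (-2 * a ^ 2 / m) := by
  have hmR : (0:ℝ) < m := by exact_mod_cast hm
  set l : ℝ := 4 * a / m with hl
  have hl0 : 0 < l := by positivity
  set Y : ℕ → Ω → ℝ := fun t ω => μ - X t ω with hY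
  have hYmeas : ∀ t, Measurable (Y t) := fun t => measurable_const.sub (hmeas t)
  have hYindep : iIndepFun Y P := by
    have := hindep.comp (fun _ => fun x : ℝ => μ - x)
      (fun _ => measurable_const.sub measurable_id)
    exact this
  have hXmean : ∀ t, ∫ ω, X t ω ∂P = μ := fun t => (hident t).integral_eq.trans hmean
  have hYbdd : ∀ t ω, |Y t ω| ≤ |μ| + 1 := by
    intro t ω
    have h1 := (hrange t ω).1
    have h2 := (hrange t ω).2
    rw [abs_le]
    constructor <;> cases abs_cases μ <;> simp only [hY] <;> linarith
  set M : ℕ → Ω → ℝ := fun s ω => ∑ t ∈ Finset.Icc 1 s, Y t ω with hM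
  have hMmeas : ∀ s, Measurable (M s) := fun s => Finset.measurable_sum _ (fun t _ => hYmeas t)
  have hsum_bdd : ∀ (T : Finset ℕ) (c : ℝ) ω, |c * ∑ t ∈ T, Y t ω| ≤ |c| * (T.card * (|μ| + 1)) := by
    intro T c ω
    rw [abs_mul]
    apply mul_le_mul_of_nonneg_left _ (abs_nonneg c)
    calc |∑ t ∈ T, Y t ω| ≤ ∑ t ∈ T, |Y t ω| := Finset.abs_sum_le_sum_abs _ _
      _ ≤ ∑ _t ∈ T, (|μ| + 1) := Finset.sum_le_sum (fun t _ => hYbdd t ω)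
      _ = T.card * (|μ| + 1) := by rw [Finset.sum_const, nsmul_eq_mul]
  have hint_exp : ∀ (T : Finset ℕ) (c : ℝ), Integrable (fun ω => Real.exp (c * ∑ t ∈ T, Y t ω)) P := by
    intro T c
    apply my_intbdd P (C := Real.exp (|c| * (T.card * (|μ| + 1))))
    · exact (Real.measurable_exp.comp ((Finset.measurable_sum _ (fun t _ => hYmeas t)).const_mul c)).aestronglyMeasurable
    · intro ω
      rw [abs_of_pos (Real.exp_pos _), Real.exp_le_exp]
      exact le_trans (le_abs_self _) (hsum_bdd T c ω)
  have hYint : ∀ t, Integrable (Y t) P := fun t =>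
    my_intbdd P (hYmeas t).aestronglyMeasurable (fun ω => hYbdd t ω)
  -- mgf bound
  have hmgf : ∀ T : Finset ℕ, ∫ ω, Real.exp (l * ∑ t ∈ T, Y t ω) ∂P
      ≤ Real.exp (T.card * (l ^ 2 / 8)) := by
    intro T
    have h1 : (fun ω => ∑ t ∈ T, Y t ω) = (∑ t ∈ T, Y t) := by
      funext ω; simp [Finset.sum_apply]
    have h2 : ∫ ω, Real.exp (l * ∑ t ∈ T, Y t ω) ∂P = mgf (∑ t ∈ T, Y t) P l := by
      rw [mgf, ← h1]
    rw [h2, hYindep.mgf_sum hYmeas T]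
    calc ∏ t ∈ T, mgf (Y t) P l ≤ ∏ _t ∈ T, Real.exp (l ^ 2 / 8) := by
          apply Finset.prod_le_prod (fun t _ => mgf_nonneg)
          intro t _
          exact my_mgf_one P (hmeas t) (hrange t) (hXmean t) l
      _ = Real.exp (l ^ 2 / 8) ^ T.card := Finset.prod_const _
      _ = Real.exp (T.card * (l ^ 2 / 8)) := by rw [← Real.exp_nat_mul]
  have hone_le : ∀ T : Finset ℕ, (1:ℝ) ≤ ∫ ω, Real.exp (l * ∑ t ∈ T, Y t ω) ∂P := by
    intro T
    have hYmean : ∀ t, ∫ ω, Y t ω ∂P = 0 := by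
      intro t
      simp only [hY]
      rw [integral_sub (integrable_const μ) (my_intbdd P (hmeas t).aestronglyMeasurable
        (C := 1) (fun ω => abs_le.2 ⟨by linarith [(hrange t ω).1], (hrange t ω).2⟩))]
      rw [hXmean t]
      simp
    have hintZ : Integrable (fun ω => l * ∑ t ∈ T, Y t ω) P :=
      ((integrable_finset_sum T (fun t _ => hYint t)).const_mul l)
    calc (1:ℝ) = ∫ ω, (l * ∑ t ∈ T, Y t ω + 1) ∂P := by
          rw [integral_add hintZ (integrable_const 1)]
          rw [integral_const_mul, integral_finset_sum T (fun t _ => hYint t)]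
          simp [hYmean]
      _ ≤ ∫ ω, Real.exp (l * ∑ t ∈ T, Y t ω) ∂P := by
          apply integral_mono (hintZ.add (integrable_const 1)) (hint_exp T l)
          intro ω
          exact Real.add_one_le_exp _
  -- events
  set A : ℕ → Set Ω := fun s => {ω | a ≤ M s ω ∧ ∀ r, 1 ≤ r → r < s → M r ω < a} with hA
  have hAsub : ∀ s, A s ⊆ {ω | a ≤ M s ω} := fun s ω hω => hω.1
  have hAmeas : ∀ s, MeasurableSet (A s) := by
    intro s
    have : A s = {ω | a ≤ M s ω} ∩ ⋂ r, ⋂ (_ : 1 ≤ r), ⋂ (_ : r < s), {ω | M r ω < a} := by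
      ext ω; simp [hA, Set.mem_iInter, Set.mem_setOf_eq]
    rw [this]
    exact (measurableSet_le measurable_const (hMmeas s)).inter
      (MeasurableSet.iInter fun r => MeasurableSet.iInter fun _ =>
        MeasurableSet.iInter fun _ => measurableSet_lt (hMmeas r) measurable_const)
  have hAdisj0 : ∀ s s', 1 ≤ s → s < s' → Disjoint (A s) (A s') := by
    intro s s' h1s hlt
    apply Set.disjoint_left.2
    rintro ω ⟨h1, _⟩ ⟨_, h2'⟩
    exact absurd h1 (not_le.2 (h2' s h1s hlt))
  have hAdisj : (↑(Finset.Icc 1 m) : Set ℕ).PairwiseDisjoint A := by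
    intro s hs s' hs' hne
    simp only [Finset.coe_Icc, Set.mem_Icc] at hs hs'
    rcases lt_or_gt_of_ne hne with h | h
    · exact hAdisj0 s s' hs.1 h
    · exact (hAdisj0 s' s hs'.1 h).symm
  have hEq : {ω | ∃ s, 1 ≤ s ∧ s ≤ m ∧ a ≤ M s ω} = ⋃ s ∈ Finset.Icc 1 m, A s := by
    ext ω
    simp only [Set.mem_setOf_eq, Set.mem_iUnion, Finset.mem_Icc, exists_prop]
    constructor
    · rintro h
      have hex : ∃ s, 1 ≤ s ∧ s ≤ m ∧ a ≤ M s ω := h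
      classical
      let s0 := Nat.find hex
      have hspec := Nat.find_spec hex
      refine ⟨s0, ⟨hspec.1, hspec.2.1⟩, hspec.2.2, ?_⟩
      intro r hr1 hrs
      by_contra hcon
      push_neg at hcon
      exact Nat.find_min hex hrs ⟨hr1, le_trans (le_of_lt (lt_of_lt_of_le hrs hspec.2.1)) le_rfl, hcon⟩
    · rintro ⟨s, hs, h1, _⟩
      exact ⟨s, hs.1, hs.2, h1⟩
  -- key inequality per s
  have hkey : ∀ s ∈ Finset.Icc 1 m,
      Real.exp (l * a) * (P (A s)).toReal ≤ ∫ ω in A s, Real.exp (l * M m ω) ∂P := by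
    intro s hs
    rw [Finset.mem_Icc] at hs
    set Z : Ω → ℝ := fun ω => ∑ t ∈ Finset.Ioc s m, Y t ω with hZ
    have hsplit : ∀ ω, M m ω = M s ω + Z ω := by
      intro ω
      simp only [hM, hZ]
      have hIccIoc : ∀ b : ℕ, Finset.Icc 1 b = Finset.Ioc 0 b := by
        intro b; ext t; simp only [Finset.mem_Icc, Finset.mem_Ioc]; omega
      rw [hIccIoc m, hIccIoc s]
      exact (Finset.sum_Ioc_consecutive _ (Nat.zero_le s) hs.2).symm
    -- sigma algebras
    have h_le : ∀ i, MeasurableSpace.comap (X i) inferInstance ≤ mΩ :=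
      fun i => measurable_iff_comap_le.mp (hmeas i)
    have hIndep12 : Indep (sigA X (Set.Iic s)) (sigA X (Set.Ioi s)) P := by
      unfold sigA
      exact indep_iSup_of_disjoint h_le hindep.iIndep (Set.Iic_disjoint_Ioi le_rfl)
    have hXm1 : ∀ t, t ≤ s → Measurable[sigA X (Set.Iic s)] (X t) := by
      intro t ht
      apply measurable_iff_comap_le.mpr
      unfold sigA
      exact le_iSup₂ (f := fun i (_ : i ∈ Set.Iic s) => MeasurableSpace.comap (X i) inferInstance) t ht
    have hXm2 : ∀ t, s < t → Measurable[sigA X (Set.Ioi s)] (X t) := by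
      intro t ht
      apply measurable_iff_comap_le.mpr
      unfold sigA
      exact le_iSup₂ (f := fun i (_ : i ∈ Set.Ioi s) => MeasurableSpace.comap (X i) inferInstance) t ht
    have hMm1 : ∀ r, r ≤ s → Measurable[sigA X (Set.Iic s)] (M r) := by
      intro r hr
      apply Finset.measurable_sum
      intro t ht
      rw [Finset.mem_Icc] at ht
      exact Measurable.sub measurable_const (hXm1 t (le_trans ht.2 hr))
    have hAm1 : MeasurableSet[sigA X (Set.Iic s)] (A s) := by
      have : A s = {ω | a ≤ M s ω} ∩ ⋂ r, ⋂ (_ : 1 ≤ r), ⋂ (_ : r < s), {ω | M r ω < a} := by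
        ext ω; simp [hA, Set.mem_iInter, Set.mem_setOf_eq]
      rw [this]
      exact MeasurableSet.inter (measurableSet_le measurable_const (hMm1 s le_rfl))
        (MeasurableSet.iInter fun r => MeasurableSet.iInter fun _ =>
          MeasurableSet.iInter fun hr => measurableSet_lt (hMm1 r (le_of_lt hr)) measurable_const)
    set f1 : Ω → ℝ := Set.indicator (A s) (fun _ => (1:ℝ)) with hf1def
    set g1 : Ω → ℝ := fun ω => Real.exp (l * Z ω) with hg1def
    have hf1 : Measurable[sigA X (Set.Iic s)] f1 := measurable_const.indicator hAm1
    have hg1 : Measurable[sigA X (Set.Ioi s)] g1 := by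
      apply Measurable.comp (f := fun ω => l * Z ω) (g := Real.exp) Real.measurable_exp
      apply Measurable.const_mul
      apply Finset.measurable_sum
      intro t ht
      rw [Finset.mem_Ioc] at ht
      exact Measurable.sub measurable_const (hXm2 t ht.1)
    have hIndepF : IndepFun f1 g1 P := by
      have h1 : MeasurableSpace.comap f1 inferInstance ≤ sigA X (Set.Iic s) :=
        measurable_iff_comap_le.mp hf1
      have h2 : MeasurableSpace.comap g1 inferInstance ≤ sigA X (Set.Ioi s) :=
        measurable_iff_comap_le.mp hg1
      exact indep_of_indep_of_le_right (indep_of_indep_of_le_left hIndep12 h1) h2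
    have hf1int : Integrable f1 P := by
      apply my_intbdd P (C := 1)
      · exact (measurable_const.indicator (hAmeas s)).aestronglyMeasurable
      · intro ω
        by_cases hω : ω ∈ A s <;> simp [hf1def, hω]
    have hg1int : Integrable g1 P := hint_exp (Finset.Ioc s m) l
    have hfg : ∫ ω, f1 ω * g1 ω ∂P = (P (A s)).toReal * ∫ ω, g1 ω ∂P := by
      have := hIndepF.integral_mul_eq_mul_integral hf1int.aestronglyMeasurable hg1int.aestronglyMeasurable
      have heq : ∫ ω, f1 ω * g1 ω ∂P = ∫ ω, (f1 * g1) ω ∂P := by rfl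
      rw [heq, this]
      congr 1
      rw [hf1def, integral_indicator_const (1:ℝ) (hAmeas s)]
      simp [measureReal_def]
    -- pointwise comparison
    have hpt : ∀ ω, Real.exp (l * a) * (f1 ω * g1 ω)
        ≤ Set.indicator (A s) (fun ω => Real.exp (l * M m ω)) ω := by
      intro ω
      by_cases hω : ω ∈ A s
      · simp only [hf1def, hg1def, Set.indicator_of_mem hω]
        rw [hsplit ω]
        have h1 : a ≤ M s ω := (hAsub s) hω
        rw [mul_add, Real.exp_add]
        have : Real.exp (l * a) ≤ Real.exp (l * M s ω) :=
          Real.exp_le_exp.2 (mul_le_mul_of_nonneg_left h1 hl0.le)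
        nlinarith [Real.exp_pos (l * Z ω), Real.exp_pos (l * M s ω)]
      · simp [hf1def, Set.indicator_of_notMem hω]
    have hintind : Integrable (Set.indicator (A s) (fun ω => Real.exp (l * M m ω))) P :=
      (hint_exp (Finset.Icc 1 m) l).indicator (hAmeas s)
    calc Real.exp (l * a) * (P (A s)).toReal
        ≤ Real.exp (l * a) * ((P (A s)).toReal * ∫ ω, g1 ω ∂P) := by
          have h1 : (1:ℝ) ≤ ∫ ω, g1 ω ∂P := hone_le (Finset.Ioc s m)
          have h2 : (0:ℝ) ≤ (P (A s)).toReal := ENNReal.toReal_nonneg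
          have h3 := mul_le_mul_of_nonneg_left h1 h2
          rw [mul_one] at h3
          exact mul_le_mul_of_nonneg_left h3 (Real.exp_nonneg _)
      _ = ∫ ω, Real.exp (l * a) * (f1 ω * g1 ω) ∂P := by
          rw [← hfg, ← integral_const_mul]
      _ ≤ ∫ ω, Set.indicator (A s) (fun ω => Real.exp (l * M m ω)) ω ∂P := by
          have hprod_int : Integrable (fun ω => Real.exp (l * a) * (f1 ω * g1 ω)) P := by
            apply my_intbdd P
              (C := Real.exp (l * a) * Real.exp (|l| * ((Finset.Ioc s m).card * (|μ| + 1))))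
            · apply AEStronglyMeasurable.const_mul
              apply AEStronglyMeasurable.mul
              · exact (measurable_const.indicator (hAmeas s)).aestronglyMeasurable
              · exact (Real.measurable_exp.comp
                  ((Finset.measurable_sum _ (fun t _ => hYmeas t)).const_mul l)).aestronglyMeasurable
            · intro ω
              have hb1 : |f1 ω| ≤ 1 := by
                by_cases hω : ω ∈ A s <;> simp [hf1def, hω]
              have hb2 : |g1 ω| ≤ Real.exp (|l| * ((Finset.Ioc s m).card * (|μ| + 1))) := by
                rw [hg1def, abs_of_pos (Real.exp_pos _), Real.exp_le_exp]
                exact le_trans (le_abs_self _) (hsum_bdd _ l ω)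
              rw [abs_mul, abs_mul, abs_of_pos (Real.exp_pos _)]
              have h0 : (0:ℝ) ≤ |f1 ω| := abs_nonneg _
              have h0' : (0:ℝ) ≤ |g1 ω| := abs_nonneg _
              have := mul_le_mul hb1 hb2 h0' (by norm_num)
              rw [one_mul] at this
              exact mul_le_mul_of_nonneg_left this (Real.exp_nonneg _)
          exact integral_mono hprod_int hintind hpt
      _ = ∫ ω in A s, Real.exp (l * M m ω) ∂P := integral_indicator (hAmeas s)
  -- assemble
  have hEq2 : {ω | ∃ s, 1 ≤ s ∧ s ≤ m ∧ a ≤ ∑ t ∈ Finset.Icc 1 s, (μ - X t ω)}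
      = ⋃ s ∈ Finset.Icc 1 m, A s := hEq
  rw [hEq2]
  have hPsum : (P (⋃ s ∈ Finset.Icc 1 m, A s)).toReal
      = ∑ s ∈ Finset.Icc 1 m, (P (A s)).toReal := by
    rw [measure_biUnion_finset hAdisj (fun s _ => hAmeas s)]
    exact ENNReal.toReal_sum (fun s _ => measure_ne_top P _)
  rw [hPsum]
  have hchain : Real.exp (l * a) * ∑ s ∈ Finset.Icc 1 m, (P (A s)).toReal
      ≤ Real.exp (m * (l ^ 2 / 8)) := by
    rw [Finset.mul_sum]
    calc ∑ s ∈ Finset.Icc 1 m, Real.exp (l * a) * (P (A s)).toReal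
        ≤ ∑ s ∈ Finset.Icc 1 m, ∫ ω in A s, Real.exp (l * M m ω) ∂P :=
          Finset.sum_le_sum hkey
      _ = ∫ ω in (⋃ s ∈ Finset.Icc 1 m, A s), Real.exp (l * M m ω) ∂P :=
          (integral_biUnion_finset _ (fun s _ => hAmeas s) hAdisj
            (fun s _ => (hint_exp (Finset.Icc 1 m) l).integrableOn)).symm
      _ ≤ ∫ ω, Real.exp (l * M m ω) ∂P :=
          setIntegral_le_integral (hint_exp (Finset.Icc 1 m) l)
            (Filter.Eventually.of_forall fun ω => (Real.exp_pos _).le)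
      _ ≤ Real.exp ((Finset.Icc 1 m).card * (l ^ 2 / 8)) := hmgf (Finset.Icc 1 m)
      _ = Real.exp (m * (l ^ 2 / 8)) := by rw [Nat.card_Icc]; norm_num
  have hS : ∑ s ∈ Finset.Icc 1 m, (P (A s)).toReal
      ≤ Real.exp (m * (l ^ 2 / 8)) * Real.exp (-(l * a)) := by
    calc ∑ s ∈ Finset.Icc 1 m, (P (A s)).toReal
        = Real.exp (-(l * a)) * (Real.exp (l * a) * ∑ s ∈ Finset.Icc 1 m, (P (A s)).toReal) := by
          rw [← mul_assoc, ← Real.exp_add]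
          simp
      _ ≤ Real.exp (-(l * a)) * Real.exp (m * (l ^ 2 / 8)) :=
          mul_le_mul_of_nonneg_left hchain (Real.exp_nonneg _)
      _ = Real.exp (m * (l ^ 2 / 8)) * Real.exp (-(l * a)) := mul_comm _ _
  calc ∑ s ∈ Finset.Icc 1 m, (P (A s)).toReal
      ≤ Real.exp (m * (l ^ 2 / 8)) * Real.exp (-(l * a)) := hS
    _ = Real.exp (m * (l ^ 2 / 8) + -(l * a)) := (Real.exp_add _ _).symm
    _ = Real.exp (-2 * a ^ 2 / m) := by
        congr 1
        rw [hl]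
        field_simp
        ring

noncomputable def tau (g : ℝ) (m : ℕ) : ℝ :=
  (g / 2 ^ m) * Real.exp (-(g / 2 ^ m) - 2 * Real.sqrt ((g / 2 ^ m) * (m * Real.log 2)))

lemma tau_nonneg {g : ℝ} (hg : 0 < g) (m : ℕ) : 0 ≤ tau g m := by
  unfold tau; positivity

lemma tau_eq (g : ℝ) (m : ℕ) : tau g m
    = (g / 2 ^ m) * Real.exp (-(g / 2 ^ m))
      * Real.exp (-(2 * Real.sqrt ((g / 2 ^ m) * (m * Real.log 2)))) := by
  unfold tau
  rw [mul_assoc, ← Real.exp_add]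
  ring_nf

lemma ymul {y : ℝ} (hy : 1 ≤ y) : y * Real.exp (-y) ≤ Real.exp (-1 : ℝ) := by
  have h1 : y ≤ Real.exp (y - 1) := by linarith [Real.add_one_le_exp (y - 1)]
  calc y * Real.exp (-y) ≤ Real.exp (y - 1) * Real.exp (-y) :=
        mul_le_mul_of_nonneg_right h1 (Real.exp_nonneg _)
    _ = Real.exp (-1 : ℝ) := by rw [← Real.exp_add]; ring_nf

lemma expm1 : Real.exp (-1 : ℝ) ≤ 0.368 := by
  rw [Real.exp_neg, inv_le_comm₀ (Real.exp_pos 1) (by norm_num)]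
  calc (0.368 : ℝ)⁻¹ ≤ 2.7182818283 := by norm_num
    _ ≤ Real.exp 1 := Real.exp_one_gt_d9.le

lemma sqrt_lb {c β : ℝ} (hc : 0 ≤ c) (h : c ^ 2 ≤ β) : c ≤ Real.sqrt β :=
  (Real.le_sqrt hc (le_trans (sq_nonneg c) h)).2 h

lemma log2_lb : (0.6931471803 : ℝ) ≤ Real.log 2 := Real.log_two_gt_d9.le

lemma tau_le_form (g : ℝ) (hg0 : 0 < g) (m : ℕ) {ycap c : ℝ} (hy : g / 2 ^ m ≤ ycap)
    (hc : 0 ≤ c) (hc2 : c ^ 2 ≤ (g / 2 ^ m) * (m * Real.log 2)) :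
    tau g m ≤ ycap * Real.exp (-(2 * c)) := by
  rw [tau_eq]
  have hsq : c ≤ Real.sqrt ((g / 2 ^ m) * (m * Real.log 2)) := sqrt_lb hc hc2
  have h1 : Real.exp (-(2 * Real.sqrt ((g / 2 ^ m) * (m * Real.log 2))))
      ≤ Real.exp (-(2 * c)) := by rw [Real.exp_le_exp]; linarith
  have hy0 : (0:ℝ) ≤ g / 2 ^ m := by positivity
  have h2 : (g / 2 ^ m) * Real.exp (-(g / 2 ^ m)) ≤ ycap := by
    calc (g / 2 ^ m) * Real.exp (-(g / 2 ^ m)) ≤ (g / 2 ^ m) * 1 :=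
          mul_le_mul_of_nonneg_left (Real.exp_le_one_iff.2 (by linarith)) hy0
      _ = g / 2 ^ m := mul_one _
      _ ≤ ycap := hy
  have h3 : (0:ℝ) ≤ (g / 2 ^ m) * Real.exp (-(g / 2 ^ m)) := by positivity
  exact mul_le_mul h2 h1 (Real.exp_nonneg _) (le_trans h3 h2)

lemma tau_le_formA (g : ℝ) (hg0 : 0 < g) (m : ℕ) {c : ℝ} (h1y : 1 ≤ g / 2 ^ m)
    (hc : 0 ≤ c) (hc2 : c ^ 2 ≤ (g / 2 ^ m) * (m * Real.log 2)) :
    tau g m ≤ Real.exp (-1 : ℝ) * Real.exp (-(2 * c)) := by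
  rw [tau_eq]
  have hsq : c ≤ Real.sqrt ((g / 2 ^ m) * (m * Real.log 2)) := sqrt_lb hc hc2
  have h1 : Real.exp (-(2 * Real.sqrt ((g / 2 ^ m) * (m * Real.log 2))))
      ≤ Real.exp (-(2 * c)) := by rw [Real.exp_le_exp]; linarith
  exact mul_le_mul (ymul h1y) h1 (Real.exp_nonneg _) (Real.exp_nonneg _)

noncomputable def phi : ℕ → ℝ := fun i =>
  if i = 0 then 0.3105 else if i = 1 then 0.15525 else if i = 2 then 0.09025 else (1/2 : ℝ) ^ i

lemma phi_nonneg : ∀ i, 0 ≤ phi i := by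
  intro i
  unfold phi
  split_ifs <;> positivity

lemma sumphi (I : ℕ) : ∑ i ∈ Finset.range I, phi i ≤ 0.806 := by
  have hpad : ∑ i ∈ Finset.range I, phi i ≤ ∑ i ∈ Finset.range (max I 3), phi i :=
    Finset.sum_le_sum_of_subset_of_nonneg (Finset.range_subset_range.2 (le_max_left _ _))
      (fun i _ _ => phi_nonneg i)
  apply le_trans hpad
  have h3 : 3 ≤ max I 3 := le_max_right _ _
  rw [Finset.range_eq_Ico, ← Finset.sum_Ico_consecutive _ (Nat.zero_le 3) h3]
  have hA : ∑ i ∈ Finset.Ico 0 3, phi i = 0.556 := by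
    rw [← Finset.range_eq_Ico]
    simp [Finset.sum_range_succ, phi]
    norm_num
  have hB : ∑ i ∈ Finset.Ico 3 (max I 3), phi i ≤ 0.25 := by
    have heq : ∀ i ∈ Finset.Ico 3 (max I 3), phi i = (1/2 : ℝ) ^ i := by
      intro i hi
      rw [Finset.mem_Ico] at hi
      unfold phi
      rw [if_neg (by omega), if_neg (by omega), if_neg (by omega)]
    rw [Finset.sum_congr rfl heq, Finset.sum_Ico_eq_sum_range]
    have : ∀ j, (1/2 : ℝ) ^ (3 + j) = (1/8 : ℝ) * (1/2 : ℝ) ^ j := by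
      intro j; rw [pow_add]; norm_num
    rw [Finset.sum_congr rfl (fun j _ => this j), ← Finset.mul_sum]
    calc (1/8 : ℝ) * ∑ j ∈ Finset.range (max I 3 - 3), (1/2 : ℝ) ^ j
        ≤ (1/8 : ℝ) * 2 := by
          apply mul_le_mul_of_nonneg_left _ (by norm_num)
          exact sum_geometric_two_le _
      _ = 0.25 := by norm_num
  linarith

/-- the big numeric series lemma -/
lemma my_num (g : ℝ) (hg : 1 < g) (J : ℕ) :
    ∑ m ∈ Finset.range J, tau g m ≤ Real.log (max 4 (2 * g)) := by
  have hg0 : (0:ℝ) < g := by linarith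
  set N : ℕ := Nat.log 2 ⌊g⌋₊ with hN
  have hfl1 : 1 ≤ ⌊g⌋₊ := Nat.le_floor (by exact_mod_cast hg.le)
  have h2N : (2:ℝ) ^ N ≤ g := by
    have h1 : (2:ℕ) ^ N ≤ ⌊g⌋₊ := Nat.pow_log_le_self 2 (by omega)
    calc (2:ℝ) ^ N = ((2^N : ℕ) : ℝ) := by push_cast; ring
      _ ≤ (⌊g⌋₊ : ℝ) := by exact_mod_cast h1
      _ ≤ g := Nat.floor_le hg0.le
  have hgN : g < (2:ℝ) ^ (N + 1) := by
    have h1 : ⌊g⌋₊ < 2 ^ (N + 1) := Nat.lt_pow_succ_log_self (by norm_num) _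
    have h2 : (⌊g⌋₊ : ℝ) + 1 ≤ (2:ℝ) ^ (N+1) := by
      have : ⌊g⌋₊ + 1 ≤ 2 ^ (N+1) := h1
      calc (⌊g⌋₊ : ℝ) + 1 = ((⌊g⌋₊ + 1 : ℕ) : ℝ) := by push_cast; ring
        _ ≤ ((2^(N+1) : ℕ) : ℝ) := by exact_mod_cast this
        _ = (2:ℝ)^(N+1) := by push_cast; ring
    linarith [Nat.lt_floor_add_one g]
  -- claims
  have claim0 : tau g 0 ≤ 0.368 := by
    have : tau g 0 = g * Real.exp (-g) := by
      unfold tau; norm_num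
    rw [this]
    exact le_trans (ymul hg.le) expm1
  have claimHead : ∀ m, 1 ≤ m → (2:ℝ) ^ m ≤ g → tau g m ≤ 0.0763 := by
    intro m hm h2m
    have hy1 : 1 ≤ g / 2 ^ m := (one_le_div (by positivity)).2 h2m
    have hc2 : (0.8325 : ℝ) ^ 2 ≤ (g / 2 ^ m) * (m * Real.log 2) := by
      have hm1 : (1:ℝ) ≤ (m:ℝ) := by exact_mod_cast hm
      have hlog : (0:ℝ) ≤ Real.log 2 := by linarith [log2_lb]
      calc (0.8325 : ℝ)^2 ≤ 0.6931471803 := by norm_num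
        _ ≤ Real.log 2 := log2_lb
        _ = 1 * (1 * Real.log 2) := by ring
        _ ≤ (g / 2^m) * ((m:ℝ) * Real.log 2) := by
            apply mul_le_mul hy1 (by nlinarith) (by linarith) (by linarith)
    have h1 := tau_le_formA g hg0 m hy1 (by norm_num) hc2
    have h2 : Real.exp (-(2 * (0.8325:ℝ))) ≤ 0.2072 := by
      have := my_expneg2 (t := 2*(0.8325:ℝ)) (t0 := 1.665) (by norm_num) (by norm_num)
      apply le_trans this
      norm_num
    calc tau g m ≤ Real.exp (-1:ℝ) * Real.exp (-(2 * (0.8325:ℝ))) := h1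
      _ ≤ 0.368 * 0.2072 := mul_le_mul expm1 h2 (Real.exp_nonneg _) (by norm_num)
      _ ≤ 0.0763 := by norm_num
  have hy_up : ∀ i, g / 2 ^ (N + 1 + i) ≤ (1/2 : ℝ) ^ i := by
    intro i
    rw [div_le_iff₀ (by positivity), pow_add]
    calc g ≤ (2:ℝ)^(N+1) := hgN.le
      _ = (1/2:ℝ)^i * ((2:ℝ)^(N+1) * 2^i) := by
          rw [div_pow]; field_simp; simp
  have hy_lo : ∀ i, (1/2 : ℝ) ^ (i+1) ≤ g / 2 ^ (N + 1 + i) := by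
    intro i
    rw [le_div_iff₀ (by positivity)]
    calc (1/2:ℝ)^(i+1) * 2^(N+1+i) = 2^N := by
          rw [div_pow, show N+1+i = N+(i+1) by ring, pow_add]
          field_simp
          ring
      _ ≤ g := h2N
  have harg : ∀ i, (1/2:ℝ)^(i+1) * ((i+1 : ℕ) * Real.log 2)
      ≤ (g / 2 ^ (N+1+i)) * ((N+1+i : ℕ) * Real.log 2) := by
    intro i
    have hlog : (0:ℝ) ≤ Real.log 2 := by linarith [log2_lb]
    apply mul_le_mul (hy_lo i) _ (by positivity) (by positivity)
    apply mul_le_mul_of_nonneg_right _ hlog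
    push_cast
    have hc := (Nat.cast_nonneg N : (0:ℝ) ≤ N)
    linarith
  have claimTail : ∀ i, tau g (N + 1 + i) ≤ phi i := by
    intro i
    match i with
    | 0 =>
      have hc2 : (0.5886:ℝ)^2 ≤ (g / 2^(N+1+0)) * ((N+1+0 : ℕ) * Real.log 2) := by
        refine le_trans ?_ (harg 0)
        push_cast
        norm_num
        nlinarith [log2_lb]
      have h1 := tau_le_form g hg0 (N+1+0) (ycap := 1) (by simpa using hy_up 0) (by norm_num) hc2
      have h2 : Real.exp (-(2 * (0.5886:ℝ))) ≤ 0.3105 := by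
        have := my_expneg2 (t := 2*(0.5886:ℝ)) (t0 := 1.1772) (by norm_num) (by norm_num)
        apply le_trans this
        norm_num
      calc tau g (N+1+0) ≤ 1 * Real.exp (-(2 * (0.5886:ℝ))) := h1
        _ ≤ 0.3105 := by rw [one_mul]; exact h2
        _ ≤ phi 0 := by unfold phi; norm_num
    | 1 =>
      have hc2 : (0.5886:ℝ)^2 ≤ (g / 2^(N+1+1)) * ((N+1+1 : ℕ) * Real.log 2) := by
        refine le_trans ?_ (harg 1)
        push_cast
        norm_num
        nlinarith [log2_lb]
      have h1 := tau_le_form g hg0 (N+1+1) (ycap := (1/2:ℝ)) (by simpa using hy_up 1) (by norm_num) hc2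
      have h2 : Real.exp (-(2 * (0.5886:ℝ))) ≤ 0.3105 := by
        have := my_expneg2 (t := 2*(0.5886:ℝ)) (t0 := 1.1772) (by norm_num) (by norm_num)
        apply le_trans this
        norm_num
      calc tau g (N+1+1) ≤ (1/2) * Real.exp (-(2 * (0.5886:ℝ))) := h1
        _ ≤ (1/2) * 0.3105 := by linarith [h2]
        _ ≤ phi 1 := by unfold phi; norm_num
    | 2 =>
      have hc2 : (0.5097:ℝ)^2 ≤ (g / 2^(N+1+2)) * ((N+1+2 : ℕ) * Real.log 2) := by
        refine le_trans ?_ (harg 2)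
        push_cast
        norm_num
        nlinarith [log2_lb]
      have h1 := tau_le_form g hg0 (N+1+2) (ycap := (1/2:ℝ)^2) (by simpa using hy_up 2) (by norm_num) hc2
      have h2 : Real.exp (-(2 * (0.5097:ℝ))) ≤ 0.361 := by
        have := my_expneg2 (t := 2*(0.5097:ℝ)) (t0 := 1.0194) (by norm_num) (by norm_num)
        apply le_trans this
        norm_num
      calc tau g (N+1+2) ≤ (1/2:ℝ)^2 * Real.exp (-(2 * (0.5097:ℝ))) := h1
        _ = (1/4) * Real.exp (-(2 * (0.5097:ℝ))) := by norm_num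
        _ ≤ (1/4) * 0.361 := by linarith [h2]
        _ ≤ phi 2 := by unfold phi; norm_num
    | (i+3) =>
      have hlog : (0:ℝ) ≤ Real.log 2 := by linarith [log2_lb]
      have hz : ((0:ℝ))^2 ≤ (g / 2 ^ (N+1+(i+3))) * ((N+1+(i+3) : ℕ) * Real.log 2) := by
        have : (0:ℝ) ≤ (g / 2 ^ (N+1+(i+3))) * ((N+1+(i+3) : ℕ) * Real.log 2) :=
          mul_nonneg (by positivity) (mul_nonneg (Nat.cast_nonneg _) hlog)
        simpa using this
      have h1 := tau_le_form g hg0 (N+1+(i+3)) (ycap := (1/2:ℝ)^(i+3)) (hy_up (i+3))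
        (c := 0) (by norm_num) hz
      calc tau g (N+1+(i+3)) ≤ (1/2:ℝ)^(i+3) * Real.exp (-(2*(0:ℝ))) := h1
        _ = (1/2:ℝ)^(i+3) := by norm_num
        _ ≤ phi (i+3) := by
            unfold phi
            rw [if_neg (by omega), if_neg (by omega), if_neg (by omega)]
  -- assemble the sum
  have hpad : ∑ m ∈ Finset.range J, tau g m ≤ ∑ m ∈ Finset.range (max J (N+1)), tau g m :=
    Finset.sum_le_sum_of_subset_of_nonneg (Finset.range_subset_range.2 (le_max_left _ _))
      (fun i _ _ => tau_nonneg hg0 i)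
  set Jb := max J (N + 1) with hJb
  have hJbN : N + 1 ≤ Jb := le_max_right _ _
  have hsplit1 : ∑ m ∈ Finset.range Jb, tau g m
      = ∑ m ∈ Finset.Ico 0 (N+1), tau g m + ∑ m ∈ Finset.Ico (N+1) Jb, tau g m := by
    rw [Finset.range_eq_Ico, ← Finset.sum_Ico_consecutive _ (Nat.zero_le (N+1)) hJbN]
  have hsplit2 : ∑ m ∈ Finset.Ico 0 (N+1), tau g m
      = tau g 0 + ∑ m ∈ Finset.Ico 1 (N+1), tau g m := by
    rw [← Finset.sum_Ico_consecutive _ (Nat.zero_le 1) (by omega)]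
    congr 1
    simp
  have hhead : ∑ m ∈ Finset.Ico 1 (N+1), tau g m ≤ (N:ℝ) * 0.0763 := by
    have hb : ∀ m ∈ Finset.Ico 1 (N+1), tau g m ≤ 0.0763 := by
      intro m hm
      rw [Finset.mem_Ico] at hm
      exact claimHead m hm.1
        (le_trans (pow_le_pow_right₀ (by norm_num) (by omega)) h2N)
    calc ∑ m ∈ Finset.Ico 1 (N+1), tau g m ≤ ∑ _m ∈ Finset.Ico 1 (N+1), (0.0763:ℝ) :=
          Finset.sum_le_sum hb
      _ = (N:ℝ) * 0.0763 := by
          rw [Finset.sum_const, Nat.card_Ico, nsmul_eq_mul]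
          norm_num
  have htail : ∑ m ∈ Finset.Ico (N+1) Jb, tau g m ≤ 0.806 := by
    rw [Finset.sum_Ico_eq_sum_range]
    calc ∑ i ∈ Finset.range (Jb - (N+1)), tau g (N+1+i)
        ≤ ∑ i ∈ Finset.range (Jb - (N+1)), phi i :=
          Finset.sum_le_sum (fun i _ => claimTail i)
      _ ≤ 0.806 := sumphi _
  have htot : ∑ m ∈ Finset.range J, tau g m ≤ 0.368 + (N:ℝ) * 0.0763 + 0.806 := by
    rw [hsplit1, hsplit2] at hpad
    linarith
  -- final numeric comparison
  rcases Nat.eq_zero_or_pos N with hN0 | hN1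
  · have hlog4 : Real.log 4 ≤ Real.log (max 4 (2*g)) :=
      Real.log_le_log (by norm_num) (le_max_left _ _)
    have h4 : Real.log 4 = 2 * Real.log 2 := by
      rw [show (4:ℝ) = 2^2 by norm_num, Real.log_pow]
      push_cast; ring
    rw [hN0] at htot
    push_cast at htot
    calc ∑ m ∈ Finset.range J, tau g m ≤ 0.368 + 0 * 0.0763 + 0.806 := htot
      _ ≤ 2 * Real.log 2 := by nlinarith [log2_lb]
      _ = Real.log 4 := h4.symm
      _ ≤ _ := hlog4
  · have hNR : (1:ℝ) ≤ (N:ℝ) := by exact_mod_cast hN1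
    have hlg : ((N:ℝ)+1) * Real.log 2 ≤ Real.log (max 4 (2*g)) := by
      have h1 : (2:ℝ)^(N+1) ≤ 2*g := by
        rw [pow_succ]
        calc (2:ℝ)^N * 2 ≤ g * 2 := by nlinarith [h2N]
          _ = 2 * g := by ring
      calc ((N:ℝ)+1) * Real.log 2 = Real.log ((2:ℝ)^(N+1)) := by
            rw [Real.log_pow]; push_cast; ring
        _ ≤ Real.log (2*g) := Real.log_le_log (by positivity) h1
        _ ≤ Real.log (max 4 (2*g)) := Real.log_le_log (by linarith) (le_max_right _ _)
    calc ∑ m ∈ Finset.range J, tau g m ≤ 0.368 + (N:ℝ) * 0.0763 + 0.806 := htot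
      _ ≤ ((N:ℝ)+1) * Real.log 2 := by nlinarith [log2_lb]
      _ ≤ _ := hlg

set_option maxHeartbeats 1000000 in
theorem stmt_18 {Ω : Type*} [MeasurableSpace Ω] (P : Measure Ω) [IsProbabilityMeasure P]
    (X : ℕ → Ω → ℝ) (μ : ℝ)
    (hmeas : ∀ i, Measurable (X i))
    (hrange : ∀ i ω, X i ω ∈ Set.Icc (0 : ℝ) 1)
    (hindep : iIndepFun X P)
    (hident : ∀ i, IdentDistrib (X i) (X 1) P P)
    (hmean : ∫ ω, X 1 ω ∂P = μ)
    (logp : ℝ → ℝ) (hlogp : ∀ x, logp x = if 1 ≤ x then Real.log x else 0)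
    (n K : ℕ) (hK : 1 ≤ K) (hn : K ≤ n)
    (B : ℕ → Ω → ℝ)
    (hB : ∀ s ω, B s ω = (1 / s) * ∑ t ∈ Finset.Icc 1 s, X t ω
        + Real.sqrt (logp ((n : ℝ) / (K * s)) / s))
    (u : ℝ) (hu : 2 * Real.sqrt ((K : ℝ) / n) ≤ u) :
    (P {ω | ∃ s, 1 ≤ s ∧ s ≤ n ∧ u ≤ μ - B s ω}).toReal
      ≤ 4 * K / (n * u ^ 2) * Real.log (Real.sqrt ((n : ℝ) / K) * u)
        + 1 / ((n : ℝ) * u ^ 2 / K - 1) := by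
  classical
  have hK0 : (0:ℝ) < K := by exact_mod_cast hK
  have hn1 : 1 ≤ n := le_trans hK hn
  have hn0 : (0:ℝ) < n := by exact_mod_cast hn1
  have hnK : (K:ℝ) ≤ n := by exact_mod_cast hn
  have hsqpos : (0:ℝ) < Real.sqrt ((K:ℝ)/n) := Real.sqrt_pos.2 (by positivity)
  have hu0 : 0 < u := lt_of_lt_of_le (by linarith) hu
  set x : ℝ := (n:ℝ) * u ^ 2 / K with hx
  have hx4 : 4 ≤ x := by
    have h1 : (2 * Real.sqrt ((K:ℝ)/n)) ^ 2 ≤ u ^ 2 := by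
      apply pow_le_pow_left₀ (by positivity) hu
    rw [mul_pow, Real.sq_sqrt (by positivity : (0:ℝ) ≤ (K:ℝ)/n)] at h1
    rw [hx, le_div_iff₀ hK0]
    have h3 : ((K:ℝ)/n)*n = K := div_mul_cancel₀ _ hn0.ne'
    nlinarith [mul_le_mul_of_nonneg_right h1 hn0.le, h3]
  have hx0 : (0:ℝ) < x := by linarith
  -- logp facts
  have hlogp_nonneg : ∀ y, 0 ≤ logp y := by
    intro y; rw [hlogp]
    split_ifs with h
    · exact Real.log_nonneg h
    · exact le_refl 0
  have hlogp_mono : ∀ {a b : ℝ}, 0 < a → a ≤ b → logp a ≤ logp b := by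
    intro a b ha hab
    rw [hlogp, hlogp]
    rcases le_or_gt 1 a with h1 | h1
    · rw [if_pos h1, if_pos (le_trans h1 hab)]
      exact Real.log_le_log ha hab
    · rw [if_neg (not_le.2 h1)]
      split_ifs with h2
      · exact Real.log_nonneg h2
      · exact le_refl 0
  -- block quantities
  set Lk : ℕ → ℝ := fun k => logp ((n:ℝ) / (K * 2 ^ (k+1))) with hLk
  set gk : ℕ → ℝ := fun k => (2:ℝ) ^ k * u ^ 2 with hgk
  set ak : ℕ → ℝ := fun k => (2:ℝ) ^ k * u + Real.sqrt ((2:ℝ) ^ k * Lk k) with hak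
  set pk : ℕ → ℝ := fun k =>
    Real.exp (-(gk k + Lk k + 2 * Real.sqrt (gk k * Lk k))) with hpk
  have hLk0 : ∀ k, 0 ≤ Lk k := fun k => hlogp_nonneg _
  have hgk0 : ∀ k, 0 < gk k := fun k => by simp only [hgk]; positivity
  -- inclusion in union of block events
  have hsub : {ω | ∃ s, 1 ≤ s ∧ s ≤ n ∧ u ≤ μ - B s ω}
      ⊆ ⋃ k ∈ Finset.range n, {ω | ∃ s, 1 ≤ s ∧ s ≤ 2 ^ (k+1) - 1
          ∧ ak k ≤ ∑ t ∈ Finset.Icc 1 s, (μ - X t ω)} := by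
    intro ω hω
    obtain ⟨s, hs1, hsn, hsu⟩ := hω
    set k := Nat.log 2 s with hk
    have hk1 : 2 ^ k ≤ s := Nat.pow_log_le_self 2 (by omega)
    have hk2 : s < 2 ^ (k+1) := Nat.lt_pow_succ_log_self (by norm_num) s
    have hkn : k < n := by
      by_contra hcon
      push_neg at hcon
      have h1 : 2 ^ n ≤ 2 ^ k := Nat.pow_le_pow_right (by norm_num) hcon
      have h2 := (Nat.lt_two_pow_self (n := n))
      omega
    simp only [Set.mem_iUnion, Finset.mem_range, exists_prop]
    refine ⟨k, hkn, s, hs1, by omega, ?_⟩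
    have hsR : (0:ℝ) < s := by exact_mod_cast hs1
    rw [hB s ω] at hsu
    set S := ∑ t ∈ Finset.Icc 1 s, X t ω with hS
    have hMsum : ∑ t ∈ Finset.Icc 1 s, (μ - X t ω) = s * μ - S := by
      rw [Finset.sum_sub_distrib, Finset.sum_const, Nat.card_Icc]
      simp [nsmul_eq_mul, hS]
    set L := logp ((n:ℝ) / (K * s)) with hL
    have hL0 : 0 ≤ L := hlogp_nonneg _
    have h2 := mul_le_mul_of_nonneg_left hsu hsR.le
    have h3 : (s:ℝ) * (μ - ((1/s) * S + Real.sqrt (L / s)))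
        = s * μ - S - s * Real.sqrt (L / s) := by
      field_simp
      ring
    have h4 : (s:ℝ) * Real.sqrt (L / s) = Real.sqrt (s * L) := by
      rw [show (s:ℝ) * L = (s:ℝ)^2 * (L / s) by field_simp,
        Real.sqrt_mul (sq_nonneg _), Real.sqrt_sq hsR.le]
    have key : (s:ℝ) * u + Real.sqrt (s * L) ≤ s * μ - S := by
      rw [← h4]
      rw [h3] at h2
      linarith
    rw [hMsum]
    have hcast : ((2:ℕ)^k : ℝ) = (2:ℝ)^k := by push_cast; ring
    have hha : (2:ℝ)^k * u ≤ s * u := by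
      apply mul_le_mul_of_nonneg_right _ hu0.le
      rw [← hcast]; exact_mod_cast hk1
    have hhb : Real.sqrt ((2:ℝ)^k * Lk k) ≤ Real.sqrt (s * L) := by
      apply Real.sqrt_le_sqrt
      have hLle : Lk k ≤ L := by
        rw [hLk, hL]
        apply hlogp_mono (by positivity)
        apply div_le_div_of_nonneg_left hn0.le (by positivity)
        have : (s:ℝ) ≤ (2:ℝ)^(k+1) := by
          rw [show ((2:ℝ)^(k+1)) = ((2^(k+1) : ℕ) : ℝ) by push_cast; ring]
          exact_mod_cast hk2.le
        nlinarith [hK0]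
      apply mul_le_mul _ hLle (hLk0 k) hsR.le
      rw [← hcast]; exact_mod_cast hk1
    simp only [hak]
    linarith
  -- per-block bound
  have hblock : ∀ k, (P {ω | ∃ s, 1 ≤ s ∧ s ≤ 2 ^ (k+1) - 1
      ∧ ak k ≤ ∑ t ∈ Finset.Icc 1 s, (μ - X t ω)}).toReal ≤ pk k := by
    intro k
    have h2k1 : 2 ≤ 2 ^ (k+1) := by
      calc 2 = 2^1 := rfl
        _ ≤ 2^(k+1) := Nat.pow_le_pow_right (by norm_num) (by omega)
    have hm1 : 1 ≤ 2 ^ (k+1) - 1 := by omega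
    have hak0 : 0 < ak k := by
      simp only [hak]
      have h1 : (0:ℝ) < (2:ℝ)^k * u := by positivity
      have h2 := Real.sqrt_nonneg ((2:ℝ)^k * Lk k)
      linarith
    refine le_trans (my_maximal P X μ hmeas hrange hindep hident hmean _ hm1 _ hak0) ?_
    rw [Real.exp_le_exp]
    have hmcast : ((2 ^ (k+1) - 1 : ℕ) : ℝ) = (2:ℝ)^(k+1) - 1 := by
      have h1le : 1 ≤ 2^(k+1) := by omega
      rw [Nat.cast_sub h1le]
      push_cast
      ring
    have hmpos : (0:ℝ) < ((2 ^ (k+1) - 1 : ℕ) : ℝ) := by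
      rw [hmcast]
      have : (2:ℝ) ≤ 2^(k+1) := by
        rw [show ((2:ℝ)^(k+1)) = ((2^(k+1):ℕ):ℝ) by push_cast; ring]
        exact_mod_cast h2k1
      linarith
    have hsq2 : Real.sqrt ((2:ℝ)^k * Lk k) ^ 2 = (2:ℝ)^k * Lk k :=
      Real.sq_sqrt (by
        have := hLk0 k
        positivity)
    have hsqm : u * Real.sqrt ((2:ℝ)^k * Lk k) = Real.sqrt (gk k * Lk k) := by
      rw [show gk k * Lk k = u^2 * ((2:ℝ)^k * Lk k) by simp only [hgk]; ring,
        Real.sqrt_mul (sq_nonneg u), Real.sqrt_sq hu0.le]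
    have hexpand : ak k ^ 2 = (2:ℝ)^k * ((2:ℝ)^k * u^2) + (2:ℝ)^k * Lk k
        + 2 * (2:ℝ)^k * (u * Real.sqrt ((2:ℝ)^k * Lk k)) := by
      simp only [hak]
      have hexp2 : ((2:ℝ)^k * u + Real.sqrt ((2:ℝ)^k * Lk k))^2
          = ((2:ℝ)^k*u)^2 + 2*((2:ℝ)^k*u)*Real.sqrt ((2:ℝ)^k*Lk k)
            + Real.sqrt ((2:ℝ)^k*Lk k)^2 := by ring
      rw [hexp2, hsq2]
      ring
    have hid : 2 * ak k ^ 2 / (2:ℝ)^(k+1) = gk k + Lk k + 2 * Real.sqrt (gk k * Lk k) := by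
      rw [hexpand, hsqm]
      simp only [hgk]
      have h2p : (2:ℝ)^(k+1) = 2 * 2^k := by rw [pow_succ]; ring
      rw [h2p]
      have h2k0 : (0:ℝ) < (2:ℝ)^k := by positivity
      field_simp
    have hle1 : 2 * ak k ^ 2 / (2:ℝ)^(k+1) ≤ 2 * ak k ^ 2 / ((2 ^ (k+1) - 1 : ℕ):ℝ) := by
      apply div_le_div_of_nonneg_left (by positivity) hmpos
      rw [hmcast]
      linarith
    have hfin : -2 * ak k ^ 2 / ((2 ^ (k+1) - 1 : ℕ):ℝ)
        = -(2 * ak k ^ 2 / ((2 ^ (k+1) - 1 : ℕ):ℝ)) := by ring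
    rw [hfin, ← hid]
    linarith
  -- total probability bound
  have hPsum : (P {ω | ∃ s, 1 ≤ s ∧ s ≤ n ∧ u ≤ μ - B s ω}).toReal
      ≤ ∑ k ∈ Finset.range n, pk k := by
    have h1 : P {ω | ∃ s, 1 ≤ s ∧ s ≤ n ∧ u ≤ μ - B s ω}
        ≤ ∑ k ∈ Finset.range n, P {ω | ∃ s, 1 ≤ s ∧ s ≤ 2 ^ (k+1) - 1
            ∧ ak k ≤ ∑ t ∈ Finset.Icc 1 s, (μ - X t ω)} :=
      le_trans (measure_mono hsub) (measure_biUnion_finset_le _ _)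
    have h2 : (∑ k ∈ Finset.range n, P {ω | ∃ s, 1 ≤ s ∧ s ≤ 2 ^ (k+1) - 1
        ∧ ak k ≤ ∑ t ∈ Finset.Icc 1 s, (μ - X t ω)}) ≠ ⊤ := by
      apply ne_of_lt
      apply ENNReal.sum_lt_top.2
      intro k _
      exact measure_lt_top P _
    calc (P {ω | ∃ s, 1 ≤ s ∧ s ≤ n ∧ u ≤ μ - B s ω}).toReal
        ≤ (∑ k ∈ Finset.range n, P {ω | ∃ s, 1 ≤ s ∧ s ≤ 2 ^ (k+1) - 1
            ∧ ak k ≤ ∑ t ∈ Finset.Icc 1 s, (μ - X t ω)}).toReal :=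
          ENNReal.toReal_mono h2 h1
      _ = ∑ k ∈ Finset.range n, (P {ω | ∃ s, 1 ≤ s ∧ s ≤ 2 ^ (k+1) - 1
            ∧ ak k ≤ ∑ t ∈ Finset.Icc 1 s, (μ - X t ω)}).toReal :=
          ENNReal.toReal_sum (fun k _ => measure_ne_top P _)
      _ ≤ ∑ k ∈ Finset.range n, pk k := Finset.sum_le_sum (fun k _ => hblock k)
  -- nat log threshold
  set kh : ℕ := Nat.log 2 (n / K) with hkh
  have hlow_iff : ∀ k, k < kh → K * 2 ^ (k+1) ≤ n := by
    intro k h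
    have h1 : 2^(k+1) ≤ n / K := (Nat.le_log_iff_pow_le (by norm_num)
      (by have := (Nat.one_le_div_iff (by omega)).2 hn; omega)).1 (by omega)
    calc K * 2^(k+1) ≤ K * (n / K) := Nat.mul_le_mul_left _ h1
      _ ≤ n := Nat.mul_div_le n K
  have hhigh_iff : ¬ (K * 2^(kh+1) ≤ n) := by
    intro hcon
    have h1 : 2^(kh+1) ≤ n / K := (Nat.le_div_iff_mul_le (by omega)).2
      (by rw [mul_comm]; exact hcon)
    have := (Nat.le_log_iff_pow_le (by norm_num)
      (by have := (Nat.one_le_div_iff (by omega)).2 hn; omega)).2 h1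
    omega
  have hkh_le : kh ≤ n := by
    have h1 : 2^kh ≤ n / K :=
      Nat.pow_log_le_self 2 (by have := (Nat.one_le_div_iff (by omega)).2 hn; omega)
    have h2 : n / K ≤ n := Nat.div_le_self n K
    have h3 := (Nat.lt_two_pow_self (n := n))
    by_contra hcon
    push_neg at hcon
    have h4 : 2^n ≤ 2^kh := Nat.pow_le_pow_right (by norm_num) (by omega)
    omega
  have h2kh_le : (2:ℝ)^kh * K ≤ n := by
    have h1 : 2^kh ≤ n / K :=
      Nat.pow_log_le_self 2 (by have := (Nat.one_le_div_iff (by omega)).2 hn; omega)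
    have h2 : 2^kh * K ≤ n := by
      calc 2^kh * K = K * 2^kh := mul_comm _ _
        _ ≤ K * (n/K) := Nat.mul_le_mul_left _ h1
        _ ≤ n := Nat.mul_div_le n K
    calc (2:ℝ)^kh * K = ((2^kh * K : ℕ) : ℝ) := by push_cast; ring
      _ ≤ n := by exact_mod_cast h2
  have h2kh_gt : (n:ℝ) < 2^(kh+1) * K := by
    have h2 : n < K * 2^(kh+1) := by
      by_contra hcon; push_neg at hcon; exact hhigh_iff hcon
    calc (n:ℝ) < ((K * 2^(kh+1) : ℕ):ℝ) := by exact_mod_cast h2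
      _ = 2^(kh+1) * K := by push_cast; ring
  have hsum : ∑ k ∈ Finset.range n, pk k
      = ∑ k ∈ Finset.range kh, pk k + ∑ k ∈ Finset.Ico kh n, pk k := by
    rw [Finset.range_eq_Ico, ← Finset.sum_Ico_consecutive _ (Nat.zero_le kh) hkh_le,
      ← Finset.range_eq_Ico]
  -- HIGH part
  have hhigh : ∑ k ∈ Finset.Ico kh n, pk k ≤ 1 / (x - 1) := by
    set r : ℝ := Real.exp (-(x/2)) with hr
    have hr0 : 0 < r := Real.exp_pos _
    have hr1 : r < 1 := by
      rw [hr, show (1:ℝ) = Real.exp 0 by simp]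
      exact Real.exp_lt_exp.2 (by linarith)
    have hgeo : ∀ m : ℕ, ∑ j ∈ Finset.range m, r ^ (j+1) ≤ r / (1 - r) := by
      intro m
      have h1 : ∑ j ∈ Finset.range m, r ^ (j+1) = r * ∑ j ∈ Finset.range m, r ^ j := by
        rw [Finset.mul_sum]
        apply Finset.sum_congr rfl
        intro j _
        rw [pow_succ]
        ring
      rw [h1]
      have h2 : ∑ j ∈ Finset.range m, r ^ j ≤ 1 / (1 - r) := by
        rw [geom_sum_eq (ne_of_lt hr1) m]
        have heq2 : (r^m - 1)/(r-1) = (1 - r^m)/(1-r) := by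
          rw [div_eq_div_iff (by linarith) (by linarith)]
          ring
        rw [heq2, div_le_div_iff₀ (by linarith) (by linarith)]
        nlinarith [pow_nonneg hr0.le m]
      calc r * ∑ j ∈ Finset.range m, r^j ≤ r * (1/(1-r)) :=
            mul_le_mul_of_nonneg_left h2 hr0.le
        _ = r / (1-r) := by ring
    have hterm : ∀ k ∈ Finset.Ico kh n, pk k ≤ r ^ (k - kh + 1) := by
      intro k hk
      rw [Finset.mem_Ico] at hk
      have h1 : pk k ≤ Real.exp (-(gk k)) := by
        simp only [hpk]
        rw [Real.exp_le_exp]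
        have := hLk0 k
        have := Real.sqrt_nonneg (gk k * Lk k)
        linarith
      have hx2 : x / 2 ≤ (2:ℝ)^kh * u^2 := by
        have heq : x/2 = (n:ℝ)*u^2/(2*K) := by rw [hx]; ring
        rw [heq, div_le_iff₀ (by positivity)]
        have hp : (2:ℝ)^(kh+1) = 2*2^kh := by rw [pow_succ]; ring
        have h6 : (n:ℝ)*u^2 ≤ (2:ℝ)^(kh+1)*K*u^2 :=
          mul_le_mul_of_nonneg_right h2kh_gt.le (sq_nonneg u)
        have h7 : (2:ℝ)^(kh+1)*K*u^2 = 2^kh*u^2*(2*K) := by rw [hp]; ring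
        linarith
      have hsplitp : (2:ℝ)^k = 2^(k-kh) * 2^kh := by
        rw [← pow_add]; congr 1; omega
      have hjj : ((k - kh + 1 : ℕ):ℝ) ≤ (2:ℝ)^(k-kh) := by
        have h5 : k - kh + 1 ≤ 2^(k-kh) := Nat.lt_two_pow_self
        calc ((k-kh+1:ℕ):ℝ) ≤ ((2^(k-kh):ℕ):ℝ) := by exact_mod_cast h5
          _ = (2:ℝ)^(k-kh) := by push_cast; ring
      have h2c : ((k - kh + 1 : ℕ):ℝ) * (x/2) ≤ gk k := by
        calc ((k-kh+1:ℕ):ℝ) * (x/2) ≤ (2:ℝ)^(k-kh) * ((2:ℝ)^kh * u^2) :=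
              mul_le_mul hjj hx2 (by linarith) (by positivity)
          _ = gk k := by simp only [hgk]; rw [hsplitp]; ring
      calc pk k ≤ Real.exp (-(gk k)) := h1
        _ ≤ Real.exp (((k-kh+1:ℕ):ℝ) * (-(x/2))) := by
            rw [Real.exp_le_exp, show ((k-kh+1:ℕ):ℝ) * (-(x/2))
              = -(((k-kh+1:ℕ):ℝ) * (x/2)) by ring]
            exact neg_le_neg h2c
        _ = r ^ (k-kh+1) := by rw [hr, ← Real.exp_nat_mul]
    have hfinal : r / (1 - r) ≤ 1 / (x - 1) := by
      have hex : x ≤ Real.exp (x/2) := by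
        have h1 : 1 + x/4 ≤ Real.exp (x/4) := by linarith [Real.add_one_le_exp (x/4)]
        have h2 : (1 + x/4)^2 ≤ Real.exp (x/4)^2 := by
          apply pow_le_pow_left₀ (by linarith) h1
        have h3 : Real.exp (x/4)^2 = Real.exp (x/2) := by
          rw [sq, ← Real.exp_add]; ring_nf
        nlinarith [sq_nonneg (1 - x/4)]
      have hrx : r * x ≤ 1 := by
        have hre : r * Real.exp (x/2) = 1 := by
          rw [hr, ← Real.exp_add]; simp
        nlinarith [hr0]
      rw [div_le_div_iff₀ (by linarith) (by linarith)]
      nlinarith [hrx]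
    calc ∑ k ∈ Finset.Ico kh n, pk k ≤ ∑ k ∈ Finset.Ico kh n, r^(k - kh + 1) :=
          Finset.sum_le_sum hterm
      _ = ∑ j ∈ Finset.range (n - kh), r^(j+1) := by
          rw [Finset.sum_Ico_eq_sum_range]
          apply Finset.sum_congr rfl
          intro j _
          congr 1
          omega
      _ ≤ r / (1-r) := hgeo _
      _ ≤ 1 / (x-1) := hfinal
  -- LOW part
  have hlow : ∑ k ∈ Finset.range kh, pk k ≤ 4 * K / (n * u^2) * (Real.log x / 2) := by
    have hlogx0 : 0 ≤ Real.log x := Real.log_nonneg (by linarith)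
    rcases Nat.eq_zero_or_pos kh with h0 | hkh1
    · rw [h0]
      simp only [Finset.range_zero, Finset.sum_empty]
      apply mul_nonneg (by positivity) (by linarith)
    · set g : ℝ := (2:ℝ)^(kh-1) * u^2 with hgdef
      have hkh1' : kh - 1 + 1 = kh := Nat.succ_pred_eq_of_pos hkh1
      have hpow1 : (2:ℝ)^kh = 2^(kh-1) * 2 := by
        rw [← pow_succ, hkh1']
      have h2g_eq : 2 * g = (2:ℝ)^kh * u^2 := by
        rw [hgdef, hpow1]; ring
      have hpow2 : (2:ℝ)^(kh+1) = 2^(kh-1) * 4 := by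
        rw [show kh + 1 = (kh - 1) + 2 by omega, pow_add]
        norm_num
      have h4g_eq : 4 * g = (2:ℝ)^(kh+1) * u^2 := by
        rw [hgdef, hpow2]; ring
      have hu2 : (0:ℝ) < u^2 := by positivity
      have hg1 : 1 < g := by
        have h1 : x < 4 * g := by
          rw [h4g_eq, hx, div_lt_iff₀ hK0]
          nlinarith [mul_lt_mul_of_pos_right h2kh_gt hu2]
        linarith
      have h2g : 2 * g ≤ x := by
        rw [h2g_eq, hx, le_div_iff₀ hK0]
        nlinarith [mul_le_mul_of_nonneg_right h2kh_le (sq_nonneg u)]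
      have hterm : ∀ k ∈ Finset.range kh, pk k ≤ (2/x) * tau g (kh - 1 - k) := by
        intro k hk
        rw [Finset.mem_range] at hk
        set m := kh - 1 - k with hm
        have hkm : k + m = kh - 1 := by omega
        have hgk_eq : gk k = g / 2^m := by
          simp only [hgk]
          rw [hgdef, ← hkm, pow_add]
          field_simp
        have hlowk : K * 2^(k+1) ≤ n := hlow_iff k hk
        have hlowkR : (K:ℝ) * 2^(k+1) ≤ n := by
          calc (K:ℝ) * 2^(k+1) = ((K * 2^(k+1) : ℕ):ℝ) := by push_cast; ring
            _ ≤ n := by exact_mod_cast hlowk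
        have hdenpos : (0:ℝ) < (K:ℝ) * 2^(k+1) := by positivity
        have harg1 : (1:ℝ) ≤ (n:ℝ)/((K:ℝ) * 2^(k+1)) := (one_le_div hdenpos).2 hlowkR
        have hLkeq : Lk k = Real.log ((n:ℝ)/((K:ℝ) * 2^(k+1))) := by
          simp only [hLk]
          rw [hlogp]
          rw [if_pos harg1]
        have hLlb : (m:ℝ) * Real.log 2 ≤ Lk k := by
          rw [hLkeq, ← Real.log_pow]
          apply Real.log_le_log (by positivity)
          rw [le_div_iff₀ hdenpos]
          have heq3 : (2:ℝ)^m * ((K:ℝ) * 2^(k+1)) = (2:ℝ)^kh * K := by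
            rw [show (2:ℝ)^m * ((K:ℝ)*2^(k+1)) = (2:ℝ)^(m + (k+1)) * K by
              rw [pow_add]; ring]
            congr 2
            omega
          rw [heq3]
          exact h2kh_le
        have hexpL : Real.exp (-(Lk k)) = (K:ℝ) * 2^(k+1) / n := by
          rw [hLkeq, Real.exp_neg, Real.exp_log (by positivity), inv_div]
        have hfactor : (K:ℝ) * 2^(k+1) / n = (2/x) * gk k := by
          simp only [hgk]
          rw [hx]
          rw [pow_succ]
          field_simp
        have hpk_eq : pk k = Real.exp (-(gk k)) * Real.exp (-(Lk k))
            * Real.exp (-(2*Real.sqrt (gk k * Lk k))) := by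
          simp only [hpk]
          rw [← Real.exp_add, ← Real.exp_add]
          ring_nf
        have hcross : Real.exp (-(2*Real.sqrt (gk k * Lk k)))
            ≤ Real.exp (-(2*Real.sqrt (gk k * ((m:ℝ) * Real.log 2)))) := by
          rw [Real.exp_le_exp]
          have := Real.sqrt_le_sqrt (mul_le_mul_of_nonneg_left hLlb (hgk0 k).le)
          linarith
        have htau : tau g m = gk k * Real.exp (-(gk k))
            * Real.exp (-(2*Real.sqrt (gk k * ((m:ℝ) * Real.log 2)))) := by
          rw [tau_eq, ← hgk_eq]
        calc pk k = Real.exp (-(gk k)) * Real.exp (-(Lk k))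
              * Real.exp (-(2*Real.sqrt (gk k * Lk k))) := hpk_eq
          _ ≤ Real.exp (-(gk k)) * Real.exp (-(Lk k))
              * Real.exp (-(2*Real.sqrt (gk k * ((m:ℝ)*Real.log 2)))) := by
              apply mul_le_mul_of_nonneg_left hcross (by positivity)
          _ = (2/x) * (gk k * Real.exp (-(gk k))
              * Real.exp (-(2*Real.sqrt (gk k * ((m:ℝ)*Real.log 2))))) := by
              rw [hexpL, hfactor]
              ring
          _ = (2/x) * tau g m := by rw [htau]
      calc ∑ k ∈ Finset.range kh, pk k
          ≤ ∑ k ∈ Finset.range kh, (2/x) * tau g (kh-1-k) := Finset.sum_le_sum hterm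
        _ = (2/x) * ∑ k ∈ Finset.range kh, tau g (kh-1-k) := by rw [Finset.mul_sum]
        _ = (2/x) * ∑ m ∈ Finset.range kh, tau g m := by rw [Finset.sum_range_reflect]
        _ ≤ (2/x) * Real.log (max 4 (2*g)) := by
            apply mul_le_mul_of_nonneg_left (my_num g hg1 kh) (by positivity)
        _ ≤ (2/x) * Real.log x := by
            apply mul_le_mul_of_nonneg_left _ (by positivity)
            apply Real.log_le_log (lt_of_lt_of_le (by norm_num) (le_max_left _ _))
            exact max_le (by linarith) h2g
        _ = 4 * K / (n*u^2) * (Real.log x / 2) := by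
            rw [hx]
            field_simp
            ring
  -- final assembly
  have hrhs1 : Real.log (Real.sqrt ((n:ℝ)/K) * u) = Real.log x / 2 := by
    have h1 : Real.sqrt ((n:ℝ)/K) * u = Real.sqrt x := by
      rw [show x = ((n:ℝ)/K) * u^2 by rw [hx]; ring]
      rw [Real.sqrt_mul (by positivity), Real.sqrt_sq hu0.le]
    rw [h1, Real.log_sqrt hx0.le]
  calc (P {ω | ∃ s, 1 ≤ s ∧ s ≤ n ∧ u ≤ μ - B s ω}).toReal
      ≤ ∑ k ∈ Finset.range n, pk k := hPsum
    _ = ∑ k ∈ Finset.range kh, pk k + ∑ k ∈ Finset.Ico kh n, pk k := hsum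
    _ ≤ 4 * K / (n*u^2) * (Real.log x / 2) + 1/(x-1) := add_le_add hlow hhigh
    _ = 4 * K / (n * u ^ 2) * Real.log (Real.sqrt ((n : ℝ) / K) * u) + 1 / (x - 1) := by
        rw [hrhs1]
end
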